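/- arXiv:1011.1679 — 2 statements merged into one kernel-verified Lean document; each statement's English description precedes it below -/
import Mathlib

section
/- Brooks' theorem: a connected finite simple graph that is regular of degree k, is not complete, and is not an odd cycle, has chromatic number at most k. -/
/-!
Lovász's proof. Greedy coloring along an order in which every vertex but the last one has a later
neighbor uses at most `k` colors, provided the last vertex sees at most `k - 1` colors.

If `G` has a cut vertex `v`, color the two sides of `G - v` together with `v` separately (in each,
`v` has degree `< k`) and permute colors so that they agree at `v`. Otherwise look for an induced
path `a - v - b` such that `G - {a, b}` is connected: color `a` and `b` alike first and finish
greedily towards `v`. If `G` is `3`-connected, any two vertices at distance two work as `a, b`. If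
`{v, x}` separates `G`, take `a` and `b` in two "end blocks" of `G - v`, found as minimal sides of
cut vertices of `G - v`; here `deg v ≥ 3` keeps `v` attached to the rest.

For `k = 2` the graph is a cycle, even by hypothesis, and for `k ≤ 1` it is complete.
-/

open Finset

lemma Finset.card_inter_add_card_inter_lt {α : Type*} [DecidableEq α] {N A S : Finset α} {y : α}
    (hAS : Disjoint A S) (hy : y ∈ N) (hyA : y ∉ A) (hyS : y ∉ S) :
    #(N ∩ A) + #(N ∩ S) < #N := by
  rw [← card_union_of_disjoint (disjoint_of_subset_left inter_subset_right
    (disjoint_of_subset_right inter_subset_right hAS))]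
  refine card_lt_card ⟨union_subset inter_subset_left inter_subset_left, fun h => ?_⟩
  rcases mem_union.mp (h hy) with h' | h'
  · exact hyA (mem_inter.mp h').2
  · exact hyS (mem_inter.mp h').2

namespace SimpleGraph

variable {V : Type*} {G H : SimpleGraph V}

/-- Unlike `G.induce s`, this keeps the vertex type, so that reachability after deleting
different sets of vertices can be compared. -/
abbrev restrict (G : SimpleGraph V) (s : Set V) : SimpleGraph V where
  Adj u w := G.Adj u w ∧ u ∈ s ∧ w ∈ s
  symm := ⟨fun _ _ h => ⟨h.1.symm, h.2.2, h.2.1⟩⟩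
  loopless := ⟨fun _ h => h.1.ne rfl⟩

lemma restrict_le (s : Set V) : G.restrict s ≤ G := fun _ _ h => h.1

lemma restrict_mono {s t : Set V} (h : s ⊆ t) : G.restrict s ≤ G.restrict t :=
  fun _ _ hadj => ⟨hadj.1, h hadj.2.1, h hadj.2.2⟩

lemma restrict_restrict (s t : Set V) : (G.restrict s).restrict t = G.restrict (s ∩ t) := by
  ext u w
  simp only [Set.mem_inter_iff]
  tauto

def Separates (G : SimpleGraph V) (s : Set V) (y z : V) : Prop :=
  y ∉ s ∧ z ∉ s ∧ ¬ (G.restrict sᶜ).Reachable y z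

lemma reachable_of_not_separates {s : Set V} {y z : V} (h : ¬ G.Separates s y z) (hy : y ∉ s)
    (hz : z ∉ s) : (G.restrict sᶜ).Reachable y z :=
  not_not.mp fun h' => h ⟨hy, hz, h'⟩

lemma Reachable.exists_adj_of_mem_of_notMem {R S : Set V} {u t : V}
    (hr : (G.restrict R).Reachable u t) (hu : u ∈ S) (ht : t ∉ S) :
    ∃ x ∈ S, ∃ y ∈ R, y ∉ S ∧ G.Adj x y := by
  obtain ⟨p⟩ := hr
  obtain ⟨d, -, hd₁, hd₂⟩ := p.exists_boundary_dart S hu ht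
  exact ⟨_, hd₁, _, d.adj.2.2, hd₂, d.adj.1⟩

def ExitsThrough (G : SimpleGraph V) (D : Set V) (c : V) : Prop :=
  ∀ ⦃x y⦄, G.Adj x y → x ∈ D → y ∉ D → y = c

namespace ExitsThrough

variable {D : Set V} {c u t : V}

lemma anti (h : G.ExitsThrough D c) (hle : H ≤ G) : H.ExitsThrough D c :=
  fun _ _ hadj => h (hle hadj)

lemma exists_adj (h : G.ExitsThrough D c) (hu : u ∈ D) (ht : t ∉ D) (hr : G.Reachable u t) :
    ∃ x ∈ D, G.Adj c x := by
  obtain ⟨p⟩ := hr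
  obtain ⟨d, -, hd₁, hd₂⟩ := p.exists_boundary_dart D hu ht
  exact ⟨_, hd₁, h d.adj hd₁ hd₂ ▸ d.adj.symm⟩

lemma reachable_restrict_insert (h : G.ExitsThrough D c) (hu : u ∈ D) (ht : t ∉ D)
    (hr : G.Reachable u t) : (G.restrict (insert c D)).Reachable u c := by
  obtain ⟨p⟩ := hr
  induction p with
  | nil => exact absurd hu ht
  | @cons u y t hadj q ih =>
    by_cases hy : y ∈ D
    · exact (Adj.reachable (G := G.restrict _) ⟨hadj, Or.inr hu, Or.inr hy⟩).trans (ih hy ht)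
    · obtain rfl := h hadj hu hy
      exact Adj.reachable (G := G.restrict _) ⟨hadj, Or.inr hu, Or.inl rfl⟩

/-- A walk between two vertices outside `D` enters and leaves `D` through `c`, so its detours
through `D` can be cut out. -/
lemma reachable_restrict_compl (h : G.ExitsThrough D c) (hu : u ∉ D) (ht : t ∉ D)
    (hr : G.Reachable u t) : (G.restrict Dᶜ).Reachable u t := by
  obtain ⟨p⟩ := hr
  suffices (u ∉ D → (G.restrict Dᶜ).Reachable u t) ∧ (u ∈ D → (G.restrict Dᶜ).Reachable c t) from
    this.1 hu
  clear hu
  induction p with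
  | nil => exact ⟨fun _ => .rfl, fun hu => absurd hu ht⟩
  | @cons u y t hadj q ih =>
    obtain ⟨ih₁, ih₂⟩ := ih ht
    refine ⟨fun hu => ?_, fun hu => ?_⟩
    · by_cases hy : y ∈ D
      · exact h hadj.symm hy hu ▸ ih₂ hy
      · exact (Adj.reachable (G := G.restrict _) ⟨hadj, hu, hy⟩).trans (ih₁ hy)
    · by_cases hy : y ∈ D
      · exact ih₂ hy
      · exact h hadj hu hy ▸ ih₁ hy

lemma reachable_restrict_compl_union {D' : Set V} {c' : V} (h : G.ExitsThrough D c)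
    (h' : G.ExitsThrough D' c') (hu : u ∉ D ∪ D') (ht : t ∉ D ∪ D') (hr : G.Reachable u t) :
    (G.restrict (D ∪ D')ᶜ).Reachable u t := by
  have := (h'.anti (restrict_le _)).reachable_restrict_compl (fun h => hu (Or.inr h))
    (fun h => ht (Or.inr h))
    (h.reachable_restrict_compl (fun h => hu (Or.inl h)) (fun h => ht (Or.inl h)) hr)
  rwa [restrict_restrict, ← Set.compl_union] at this

end ExitsThrough

def IsProperOn {α : Type*} (G : SimpleGraph V) (C : V → α) (s : Set V) : Prop :=
  ∀ ⦃x⦄, x ∈ s → ∀ ⦃y⦄, y ∈ s → G.Adj x y → C x ≠ C y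

lemma IsProperOn.colorable {k : ℕ} {C : V → Fin k} (h : G.IsProperOn C Set.univ) :
    G.Colorable k :=
  ⟨Coloring.mk C fun hadj => h trivial trivial hadj⟩

lemma IsProperOn.update [DecidableEq V] {α : Type*} {C : V → α} {s : Set V} {u : V} {c : α}
    (hC : G.IsProperOn C s) (hc : ∀ y ∈ s, G.Adj u y → c ≠ C y) :
    G.IsProperOn (Function.update C u c) (insert u s) := by
  intro x hx y hy hadj
  by_cases hxu : x = u
  · subst hxu
    rw [Function.update_self, Function.update_of_ne hadj.ne']
    exact hc y (hy.resolve_left hadj.ne') hadj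
  by_cases hyu : y = u
  · subst hyu
    rw [Function.update_self, Function.update_of_ne hxu]
    exact (hc x (hx.resolve_left hxu) hadj.symm).symm
  rw [Function.update_of_ne hxu, Function.update_of_ne hyu]
  exact hC (hx.resolve_left hxu) (hy.resolve_left hyu) hadj

/-- Permute the colors of `C₁` so that they agree with `C₂` at `v`, then glue. -/
lemma colorable_of_isProperOn_of_inter_subset {k : ℕ} {s t : Set V} {v : V}
    (hcover : ∀ ⦃x y⦄, G.Adj x y → x ∈ s ∧ y ∈ s ∨ x ∈ t ∧ y ∈ t) (hst : s ∩ t ⊆ {v})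
    {C₁ C₂ : V → Fin k} (h₁ : G.IsProperOn C₁ s) (h₂ : G.IsProperOn C₂ t) : G.Colorable k := by
  classical
  set σ := Equiv.swap (C₁ v) (C₂ v)
  set C : V → Fin k := fun x => if x ∈ s then σ (C₁ x) else C₂ x
  have hCs : ∀ x ∈ s, C x = σ (C₁ x) := fun x hx => if_pos hx
  have hCt : ∀ x ∈ t, C x = C₂ x := by
    intro x hxt
    by_cases hxs : x ∈ s
    · obtain rfl : x = v := hst ⟨hxs, hxt⟩
      rw [hCs x hxs, Equiv.swap_apply_left]
    · exact if_neg hxs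
  refine IsProperOn.colorable (C := C) fun x _ y _ hadj => ?_
  rcases hcover hadj with ⟨hx, hy⟩ | ⟨hx, hy⟩
  · rw [hCs x hx, hCs y hy]
    exact σ.injective.ne (h₁ hx hy hadj)
  · rw [hCt x hx, hCt y hy]
    exact h₂ hx hy hadj

lemma ExitsThrough.colorable_of_isProperOn {k : ℕ} {X : Set V} {v : V} (hX : G.ExitsThrough X v)
    {C₁ C₂ : V → Fin k} (h₁ : G.IsProperOn C₁ (insert v X)) (h₂ : G.IsProperOn C₂ Xᶜ) :
    G.Colorable k := by
  refine colorable_of_isProperOn_of_inter_subset (fun a b hab => ?_)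
    (fun a ⟨ha₁, ha₂⟩ => ha₁.resolve_right ha₂) h₁ h₂
  by_cases ha : a ∈ X <;> by_cases hb : b ∈ X
  · exact Or.inl ⟨Or.inr ha, Or.inr hb⟩
  · exact Or.inl ⟨Or.inr ha, Or.inl (hX hab ha hb)⟩
  · exact Or.inl ⟨Or.inl (hX hab.symm hb ha), Or.inr hb⟩
  · exact Or.inr ⟨ha, hb⟩

structure IsNonseparatingCherry (G : SimpleGraph V) (a v b : V) : Prop where
  adj_left : G.Adj a v
  adj_right : G.Adj b v
  not_adj : ¬ G.Adj a b
  ne : a ≠ b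
  reachable : ∀ u, u ≠ a → u ≠ b → (G.restrict {a, b}ᶜ).Reachable u v

lemma Connected.exists_adj_adj_not_adj_of_ne_top (hconn : G.Connected) (hne : G ≠ ⊤) :
    ∃ a v b, G.Adj a v ∧ G.Adj v b ∧ ¬ G.Adj a b ∧ a ≠ b := by
  obtain ⟨x, y, hxy, hnadj⟩ := ne_top_iff_exists_not_adj.mp hne
  obtain ⟨p, hp⟩ := (hconn.preconnected x y).exists_walk_length_eq_dist
  have h₀ := (hconn.preconnected x y).dist_eq_zero_iff.not.mpr hxy
  have h₁ := dist_eq_one_iff_adj.not.mpr hnadj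
  exact p.exists_adj_adj_not_adj_ne hp (by omega)

lemma Connected.exists_isNonseparatingCherry (hconn : G.Connected) (hne : G ≠ ⊤)
    (h3 : ∀ x x' y z, ¬ G.Separates {x, x'} y z) : ∃ a v b, G.IsNonseparatingCherry a v b := by
  obtain ⟨a, v, b, hav, hvb, hab, hne⟩ := hconn.exists_adj_adj_not_adj_of_ne_top hne
  exact ⟨a, v, b, hav, hvb.symm, hab, hne, fun u hua hub =>
    reachable_of_not_separates (h3 a b u v) (by simp [hua, hub]) (by simp [hav.ne', hvb.ne])⟩

/-- The component of `d` in `G - s` (empty if `d ∈ s`). -/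
def componentAvoiding (G : SimpleGraph V) (s : Set V) (d : V) : Set V :=
  {w | w ∉ s ∧ (G.restrict sᶜ).Reachable w d}

lemma mem_componentAvoiding_self {s : Set V} {d : V} (hd : d ∉ s) :
    d ∈ G.componentAvoiding s d :=
  ⟨hd, .rfl⟩

lemma exitsThrough_componentAvoiding {s t : Set V} {d q : V} (h : s ∩ t ⊆ {q}) :
    (G.restrict t).ExitsThrough (G.componentAvoiding s d) q := by
  rintro x y ⟨hxy, -, hyt⟩ ⟨hxs, hxd⟩ hy
  by_contra hyq
  have hys : y ∉ s := fun hys => hyq (h ⟨hys, hyt⟩)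
  exact hy ⟨hys, (Adj.reachable (G := G.restrict sᶜ) ⟨hxy.symm, hys, hxs⟩).trans hxd⟩

/-- `p = (c, d)` where `c` is a cut vertex of `G - v` and the component of `d` in `G - v - c`
lies in `E`. -/
def IsCutSide (G : SimpleGraph V) (v : V) (E : Set V) (p : V × V) : Prop :=
  p.1 ≠ v ∧ (∃ z, G.Separates {v, p.1} p.2 z) ∧ G.componentAvoiding {v, p.1} p.2 ⊆ E

section CutSides

variable {v c d : V} {E : Set V}

/-- A minimal side contains no cut vertex `x` of `G - v`: a component of `G - v - x` avoiding `c`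
would be a smaller side. -/
lemma not_separates_of_minimalFor (h2 : ∀ x y z, ¬ G.Separates {x} y z)
    (hmin : MinimalFor (G.IsCutSide v E) (fun p => G.componentAvoiding {v, p.1} p.2) (c, d))
    {x : V} (hx : x ∈ G.componentAvoiding {v, c} d) (y z : V) : ¬ G.Separates {v, x} y z := by
  rintro ⟨hy, hz, hyz⟩
  set D := G.componentAvoiding {v, c} d
  obtain ⟨hcv, -, hDE⟩ := hmin.1
  have hxv : x ≠ v := fun h => hx.1 (Or.inl h)
  have hxc : x ≠ c := fun h => hx.1 (Or.inr h)
  have hc : c ∉ ({v, x} : Set V) := by simp [hcv, hxc.symm]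
  obtain ⟨z', hz', hz'c⟩ : ∃ z' ∉ ({v, x} : Set V), ¬ (G.restrict {v, x}ᶜ).Reachable z' c := by
    by_contra! h
    exact hyz ((h y hy).trans (h z hz).symm)
  have hsub : G.componentAvoiding {v, x} z' ⊆ D := by
    rintro w ⟨hw, hwz'⟩
    by_contra hwD
    have hDc : (G.restrict {v}ᶜ).ExitsThrough D c :=
      exitsThrough_componentAvoiding fun t ⟨hts, htv⟩ => by simp_all
    have hr := hDc.reachable_restrict_compl hwD (fun h => h.1 (Or.inr rfl))
      (reachable_of_not_separates (h2 v w c) (fun h => hw (Or.inl h)) (by simpa using hcv))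
    rw [restrict_restrict] at hr
    refine hz'c (hwz'.symm.trans (hr.mono (restrict_mono ?_)))
    rintro t ⟨htv, htD⟩ (rfl | rfl)
    exacts [htv rfl, htD hx]
  have hside : G.IsCutSide v E (x, z') := ⟨hxv, ⟨c, hz', hc, hz'c⟩, hsub.trans hDE⟩
  exact (hmin.2 hside hsub hx).1 (Or.inr rfl)

lemma reachable_of_minimalFor (h2 : ∀ x y z, ¬ G.Separates {x} y z)
    (hmin : MinimalFor (G.IsCutSide v E) (fun p => G.componentAvoiding {v, p.1} p.2) (c, d))
    {a b u : V} (ha : a ∈ G.componentAvoiding {v, c} d)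
    (hb : b ∉ insert c (G.componentAvoiding {v, c} d)) (hu : u ∈ G.componentAvoiding {v, c} d)
    (hua : u ≠ a) : (G.restrict {a, b}ᶜ).Reachable u c := by
  have hcv : c ≠ v := hmin.1.1
  have hca : c ≠ a := fun h => ha.1 (Or.inr h.symm)
  have huv : u ≠ v := fun h => hu.1 (Or.inl h)
  have hr := reachable_of_not_separates (not_separates_of_minimalFor h2 hmin ha u c)
    (by simp [hua, huv]) (by simp [hcv, hca])
  have hDc : (G.restrict {v, a}ᶜ).ExitsThrough (G.componentAvoiding {v, c} d) c :=
    exitsThrough_componentAvoiding fun t ⟨hts, hta⟩ => by simp_all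
  refine ((hDc.reachable_restrict_insert hu (fun h => h.1 (Or.inr rfl)) hr).mono ?_)
  rw [restrict_restrict]
  refine restrict_mono ?_
  rintro w ⟨hwa, hw⟩ (rfl | rfl)
  exacts [hwa (Or.inr rfl), hb hw]

lemma exists_adj_mem_componentAvoiding (h2 : ∀ x y z, ¬ G.Separates {x} y z) (hcv : c ≠ v)
    (hd : d ∉ ({v, c} : Set V)) : ∃ a ∈ G.componentAvoiding {v, c} d, G.Adj v a := by
  have hDv : (G.restrict {c}ᶜ).ExitsThrough (G.componentAvoiding {v, c} d) v :=
    exitsThrough_componentAvoiding fun t ⟨hts, htc⟩ => by simp_all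
  obtain ⟨a, ha, hva⟩ := hDv.exists_adj (mem_componentAvoiding_self hd) (fun h => h.1 (Or.inl rfl))
    (reachable_of_not_separates (h2 c d v) (by simp_all) (by simpa using hcv.symm))
  exact ⟨a, ha, hva.1⟩

end CutSides

section Finite

variable [Fintype V] [DecidableRel G.Adj]

lemma Connected.eq_top_of_degree_le_one (hconn : G.Connected) (hdeg : ∀ v, G.degree v ≤ 1) :
    G = ⊤ := by
  classical
  by_contra hne
  obtain ⟨a, v, b, hav, hvb, -, hab⟩ := hconn.exists_adj_adj_not_adj_of_ne_top hne
  have hsub : ({a, b} : Finset V) ⊆ G.neighborFinset v := by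
    simp [insert_subset_iff, hav.symm, hvb]
  have := card_neighborFinset_eq_degree G v ▸ card_le_card hsub
  rw [card_pair hab] at this
  have := hdeg v
  omega

/-- The copy of each neighborhood already fills the neighborhood of its image, so the image of
the copy is closed under adjacency. -/
lemma Copy.nonempty_iso_of_isRegularOfDegree {W : Type*} [Fintype W] [Nonempty W]
    {H : SimpleGraph W} [DecidableRel H.Adj] {k : ℕ} (f : H.Copy G) (hH : H.IsRegularOfDegree k)
    (hG : G.IsRegularOfDegree k) (hconn : G.Connected) : Nonempty (H ≃g G) := by
  classical
  have hlift : ∀ u w, G.Adj (f u) w → ∃ w', H.Adj u w' ∧ f w' = w := by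
    intro u w huw
    have hnbr : (H.neighborFinset u).map f.toEmbedding = G.neighborFinset (f u) := by
      refine eq_of_subset_of_card_le (fun w hw => ?_) (by simp [hH.degree_eq, hG.degree_eq])
      obtain ⟨w', hw', rfl⟩ := mem_map.mp hw
      exact (mem_neighborFinset _ _ _).mpr (f.toHom.map_adj ((mem_neighborFinset _ _ _).mp hw'))
    obtain ⟨w', hw', rfl⟩ := mem_map.mp (hnbr ▸ (mem_neighborFinset _ _ _).mpr huw)
    exact ⟨w', (mem_neighborFinset _ _ _).mp hw', rfl⟩
  have hsurj : Function.Surjective f := by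
    intro w
    obtain ⟨u⟩ := ‹Nonempty W›
    obtain ⟨p⟩ := hconn.preconnected (f u) w
    suffices ∀ {x y} (p : G.Walk x y), x ∈ Set.range f → y ∈ Set.range f from this p ⟨u, rfl⟩
    intro x y p
    induction p with
    | nil => exact fun h => h
    | cons h q ih =>
      rintro ⟨u, rfl⟩
      obtain ⟨w', -, rfl⟩ := hlift u _ h
      exact ih ⟨w', rfl⟩
  refine ⟨⟨Equiv.ofBijective f ⟨f.injective, hsurj⟩, fun {a b} => ⟨fun h => ?_, f.toHom.map_adj⟩⟩⟩
  obtain ⟨w', ha, hw'⟩ := hlift a _ h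
  exact f.injective hw' ▸ ha

lemma Connected.exists_iso_cycleGraph (hconn : G.Connected) (hreg : G.IsRegularOfDegree 2) :
    ∃ n, Nonempty (G ≃g cycleGraph n) := by
  classical
  have hcyc : ¬ G.IsAcyclic := fun hacyc => by
    have h₁ := (IsTree.mk hconn hacyc).card_edgeFinset
    have h₂ := G.sum_degrees_eq_twice_card_edges
    simp only [hreg.degree_eq, sum_const, card_univ, smul_eq_mul] at h₂
    omega
  simp only [IsAcyclic, not_forall, not_not] at hcyc
  obtain ⟨v, p, hp⟩ := hcyc
  obtain ⟨m, hm⟩ : ∃ m, p.length = m + 3 := ⟨p.length - 3, by have := hp.three_le_length; omega⟩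
  obtain ⟨f⟩ := (cycleGraph_isContained_iff (by omega)).mpr ⟨v, p, hp, hm⟩
  have hreg' : (cycleGraph (m + 3)).IsRegularOfDegree 2 := fun _ => cycleGraph_degree_three_le
  exact ⟨m + 3, (f.nonempty_iso_of_isRegularOfDegree hreg' hreg hconn).map Iso.symm⟩

variable [DecidableEq V]

lemma card_neighborFinset_inter_lt_degree {T : Finset V} {v u : V} (hvu : G.Adj v u)
    (huT : u ∉ T) : #(G.neighborFinset v ∩ T) < G.degree v := by
  rw [← card_neighborFinset_eq_degree]
  exact card_lt_card ⟨inter_subset_left,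
    fun h => huT (mem_inter.mp (h ((mem_neighborFinset _ _ _).mpr hvu))).2⟩

lemma exists_adj_ne_ne_of_three_le_degree {v : V} (hv : 3 ≤ G.degree v) (a b : V) :
    ∃ w, w ≠ a ∧ w ≠ b ∧ G.Adj v w := by
  have : 0 < #(((G.neighborFinset v).erase a).erase b) := by
    have := pred_card_le_card_erase (s := G.neighborFinset v) (a := a)
    have := pred_card_le_card_erase (s := (G.neighborFinset v).erase a) (a := b)
    rw [card_neighborFinset_eq_degree] at *
    omega
  obtain ⟨w, hw⟩ := card_pos.mp this
  simp only [mem_erase, mem_neighborFinset] at hw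
  exact ⟨w, hw.2.1, hw.1, hw.2.2⟩

/-- Greedy coloring, by induction on `S ⊆ T`: the vertex `u` is colored after all of `S - u` and
still finds a free color. -/
lemma exists_isProperOn_extend {k : ℕ} (C₀ : V → Fin k) {A T : Finset V} (hAT : Disjoint A T)
    (hA : G.IsProperOn C₀ A)
    (hT : ∀ S ⊆ T, S.Nonempty →
      ∃ u ∈ S, #((G.neighborFinset u ∩ A).image C₀) + #(G.neighborFinset u ∩ S) < k) :
    ∃ C : V → Fin k, G.IsProperOn C ↑(A ∪ T) ∧ Set.EqOn C C₀ A := by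
  suffices ∀ S ⊆ T, ∃ C : V → Fin k, G.IsProperOn C ↑(A ∪ S) ∧ Set.EqOn C C₀ A from
    this T subset_rfl
  intro S
  induction S using Finset.strongInduction with
  | H S ih =>
  intro hST
  rcases S.eq_empty_or_nonempty with rfl | hS
  · exact ⟨C₀, by simpa using hA, fun _ _ => rfl⟩
  obtain ⟨u, huS, hu⟩ := hT S hST hS
  have huA : u ∉ A := fun h => Finset.disjoint_left.mp hAT h (hST huS)
  obtain ⟨C, hC, hCA⟩ := ih _ (erase_ssubset huS) ((erase_subset u S).trans hST)
  set used := (G.neighborFinset u ∩ A).image C₀ ∪ (G.neighborFinset u ∩ S).image C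
  obtain ⟨c, -, hc⟩ : ∃ c ∈ (univ : Finset (Fin k)), c ∉ used := by
    refine exists_mem_notMem_of_card_lt_card ?_
    have := card_image_le (s := G.neighborFinset u ∩ S) (f := C)
    exact (card_union_le _ _).trans_lt (by simp only [card_univ, Fintype.card_fin]; omega)
  have hAS : (↑(A ∪ S) : Set V) = insert u ↑(A ∪ S.erase u) := by
    rw [← coe_insert, ← union_insert, insert_erase huS]
  refine ⟨Function.update C u c, hAS ▸ hC.update fun y hy hadj => ?_, fun x hx => ?_⟩
  · rintro rfl
    have hy' := (mem_neighborFinset _ _ _).mpr hadj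
    rcases mem_union.mp hy with hyA | hyS
    · exact hc (mem_union_left _ (mem_image.mpr ⟨y, mem_inter.mpr ⟨hy', hyA⟩, (hCA hyA).symm⟩))
    · exact hc (mem_union_right _
        (mem_image_of_mem C (mem_inter.mpr ⟨hy', mem_of_mem_erase hyS⟩)))
  · rw [Function.update_of_ne (ne_of_mem_of_not_mem hx huA)]
    exact hCA hx

lemma Reachable.exists_card_inter_add_card_inter_lt {A S : Finset V} {R : Set V} {u t : V}
    (hr : (G.restrict R).Reachable u t) (hRA : ∀ x ∈ R, x ∉ A) (hAS : Disjoint A S)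
    (hu : u ∈ S) (ht : t ∉ S) :
    ∃ x ∈ S, #(G.neighborFinset x ∩ A) + #(G.neighborFinset x ∩ S) < G.degree x := by
  obtain ⟨x, hxS, y, hyR, hyS, hxy⟩ := hr.exists_adj_of_mem_of_notMem (S := ↑S) hu ht
  exact ⟨x, hxS, card_neighborFinset_eq_degree G x ▸
    card_inter_add_card_inter_lt hAS ((mem_neighborFinset _ _ _).mpr hxy) (hRA y hyR) hyS⟩

lemma exists_isProperOn_of_reachable {k : ℕ} (hdeg : ∀ v, G.degree v ≤ k) {T : Finset V} {t : V}
    (hlow : #(G.neighborFinset t ∩ T) < k)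
    (hreach : ∀ u ∈ T, (G.restrict T).Reachable u t) : ∃ C : V → Fin k, G.IsProperOn C T := by
  have hT : ∀ S ⊆ T, S.Nonempty → ∃ u ∈ S, #(G.neighborFinset u ∩ S) < k := by
    intro S hST ⟨u, hu⟩
    by_cases htS : t ∈ S
    · exact ⟨t, htS, (card_le_card (inter_subset_inter_left hST)).trans_lt hlow⟩
    obtain ⟨x, hxS, hx⟩ := (hreach u (hST hu)).exists_card_inter_add_card_inter_lt (A := ∅)
      (by simp) (disjoint_empty_left S) hu htS
    exact ⟨x, hxS, by simpa using hx.trans_le (hdeg x)⟩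
  obtain ⟨C, hC, -⟩ := exists_isProperOn_extend (G := G) (fun _ => ⟨0, Nat.zero_lt_of_lt hlow⟩)
    (disjoint_empty_left T) (by simp [IsProperOn]) (by simpa using hT)
  exact ⟨C, by simpa using hC⟩

/-- Color `a` and `b` alike first, then the rest greedily towards `v`, which sees only `k - 1`
colors because two of its neighbors share one. -/
lemma IsNonseparatingCherry.colorable {k : ℕ} (hdeg : ∀ v, G.degree v ≤ k) {a v b : V}
    (h : G.IsNonseparatingCherry a v b) : G.Colorable k := by
  have hab : ({a, b} : Finset V) ⊆ G.neighborFinset v := by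
    simp [insert_subset_iff, h.adj_left.symm, h.adj_right.symm]
  have hk : 2 ≤ k := by
    calc 2 = #({a, b} : Finset V) := (card_pair h.ne).symm
    _ ≤ G.degree v := card_neighborFinset_eq_degree G v ▸ card_le_card hab
    _ ≤ k := hdeg v
  set C₀ : V → Fin k := fun _ => ⟨0, by omega⟩
  have hA : G.IsProperOn C₀ ({a, b} : Finset V) := by
    intro x hx y hy hadj
    simp only [coe_insert, coe_singleton, Set.mem_insert_iff, Set.mem_singleton_iff] at hx hy
    rcases hx with rfl | rfl <;> rcases hy with rfl | rfl
    exacts [(hadj.ne rfl).elim, (h.not_adj hadj).elim, (h.not_adj hadj.symm).elim, (hadj.ne rfl).elim]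
  have hT : ∀ S ⊆ ({a, b} : Finset V)ᶜ, S.Nonempty → ∃ u ∈ S,
      #((G.neighborFinset u ∩ {a, b}).image C₀) + #(G.neighborFinset u ∩ S) < k := by
    intro S hS ⟨u, hu⟩
    have hSab : Disjoint ({a, b} : Finset V) S := disjoint_of_subset_right hS disjoint_compl_right
    have himg : ∀ w, #((G.neighborFinset w ∩ {a, b}).image C₀) ≤ 1 := fun w =>
      card_le_one.mpr fun c hc c' hc' => by
        obtain ⟨_, _, rfl⟩ := mem_image.mp hc
        obtain ⟨_, _, rfl⟩ := mem_image.mp hc'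
        rfl
    by_cases hvS : v ∈ S
    · refine ⟨v, hvS, ?_⟩
      have hsum : #(G.neighborFinset v ∩ S) + 2 ≤ G.degree v := by
        rw [← card_pair h.ne, ← card_union_of_disjoint (disjoint_of_subset_left inter_subset_right
          hSab.symm), ← card_neighborFinset_eq_degree]
        exact card_le_card (union_subset inter_subset_left hab)
      have := himg v
      have := hdeg v
      omega
    obtain ⟨hua, hub⟩ : u ≠ a ∧ u ≠ b := by simpa [not_or] using hS hu
    obtain ⟨x, hxS, hx⟩ := (h.reachable u hua hub).exists_card_inter_add_card_inter_lt
      (by simp) hSab hu hvS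
    have := card_image_le (s := G.neighborFinset x ∩ {a, b}) (f := C₀)
    have := hdeg x
    exact ⟨x, hxS, by omega⟩
  obtain ⟨C, hC, -⟩ := exists_isProperOn_extend C₀ disjoint_compl_right hA hT
  rw [union_compl, coe_univ] at hC
  exact hC.colorable

lemma colorable_of_separates_singleton {k : ℕ} (hconn : G.Connected)
    (hdeg : ∀ v, G.degree v ≤ k) {v y z : V} (hsep : G.Separates {v} y z) : G.Colorable k := by
  obtain ⟨hy, hz, hyz⟩ := hsep
  rw [Set.mem_singleton_iff] at hy hz
  set X : Finset V := {w | w ≠ v ∧ (G.restrict {v}ᶜ).Reachable w y}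
  have hvX : v ∉ X := by simp [X]
  have hyX : y ∈ X := by simpa [X] using hy
  have hzX : z ∉ insert v X := by
    simpa [X, hz] using fun h => hyz h.symm
  have hX : G.ExitsThrough X v := by
    intro x w hadj hx hw
    by_contra hwv
    simp only [X, coe_filter, mem_univ, true_and, Set.mem_ofPred_eq, not_and] at hx hw
    exact hw hwv ((Adj.reachable (G := G.restrict _) ⟨hadj.symm, hwv, hx.1⟩).trans hx.2)
  obtain ⟨x, hxX, hvx⟩ := hX.exists_adj hyX hvX (hconn.preconnected y v)
  obtain ⟨w, hwX, hvw⟩ : ∃ w ∉ insert v X, G.Adj v w := by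
    obtain ⟨p⟩ := hconn.preconnected y z
    obtain ⟨d, -, hd₁, hd₂⟩ :=
      p.exists_boundary_dart (insert v X : Finset V) (mem_insert_of_mem hyX) hzX
    rcases mem_insert.mp hd₁ with h | h
    · exact ⟨_, hd₂, h ▸ d.adj⟩
    · have := hX d.adj h fun h' => hd₂ (mem_insert_of_mem h')
      exact absurd (this ▸ mem_insert_self _ _) hd₂
  obtain ⟨C₁, hC₁⟩ := exists_isProperOn_of_reachable hdeg (T := insert v X) (t := v)
    ((card_neighborFinset_inter_lt_degree hvw hwX).trans_le (hdeg v)) fun u hu => by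
      rcases mem_insert.mp hu with rfl | hu
      · rfl
      · simpa using hX.reachable_restrict_insert hu hvX (hconn.preconnected u v)
  obtain ⟨C₂, hC₂⟩ := exists_isProperOn_of_reachable hdeg (T := Xᶜ) (t := v)
    ((card_neighborFinset_inter_lt_degree hvx (by simpa using hxX)).trans_le (hdeg v))
    fun u hu => by
      simpa using hX.reachable_restrict_compl (by simpa using hu) hvX (hconn.preconnected u v)
  exact hX.colorable_of_isProperOn (coe_insert v X ▸ hC₁) (coe_compl X ▸ hC₂)

/-- `a ∈ D` and `b ∈ D'` are neighbors of `v` in two disjoint minimal sides, with cut vertices `c`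
and `c'`. A vertex of `D - a` reaches `c`, a vertex of `D' - b` reaches `c'`, and walks between
the remaining vertices can be rerouted around `D` and `D'`. -/
lemma exists_isNonseparatingCherry_of_minimalFor (h2 : ∀ x y z, ¬ G.Separates {x} y z)
    {v c d c' d' : V} (hv : 3 ≤ G.degree v)
    (hmin : MinimalFor (G.IsCutSide v Set.univ) (fun p => G.componentAvoiding {v, p.1} p.2) (c, d))
    (hmin' : MinimalFor (G.IsCutSide v (insert c (G.componentAvoiding {v, c} d))ᶜ)
      (fun p => G.componentAvoiding {v, p.1} p.2) (c', d')) :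
    ∃ a b, G.IsNonseparatingCherry a v b := by
  obtain ⟨hcv, ⟨z, hd, hz, hdz⟩, -⟩ := hmin.1
  obtain ⟨hc'v, ⟨z', hd', hz', hd'z'⟩, hD'⟩ := hmin'.1
  set D := G.componentAvoiding {v, c} d
  set D' := G.componentAvoiding {v, c'} d'
  have hcD : c ∉ D := fun h => h.1 (Or.inr rfl)
  have hc'D' : c' ∉ D' := fun h => h.1 (Or.inr rfl)
  have hcD' : c ∉ D' := fun h => not_separates_of_minimalFor h2 hmin' h d z ⟨hd, hz, hdz⟩
  have hc'D : c' ∉ D := fun h => not_separates_of_minimalFor h2 hmin h d' z' ⟨hd', hz', hd'z'⟩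
  obtain ⟨a, haD, hva⟩ := exists_adj_mem_componentAvoiding h2 hcv hd
  obtain ⟨b, hbD', hvb⟩ := exists_adj_mem_componentAvoiding h2 hc'v hd'
  have hbD : b ∉ insert c D := hD' hbD'
  have haD' : a ∉ insert c' D' := by
    rintro (rfl | h)
    exacts [hc'D haD, hD' h (Or.inr haD)]
  have hDc : (G.restrict {v}ᶜ).ExitsThrough D c :=
    exitsThrough_componentAvoiding fun t ⟨hts, htv⟩ => by simp_all
  have hD'c' : (G.restrict {v}ᶜ).ExitsThrough D' c' :=
    exitsThrough_componentAvoiding fun t ⟨hts, htv⟩ => by simp_all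
  set K := G.restrict {a, b}ᶜ
  have hout : ∀ u t, u ∉ D ∪ D' → u ≠ v → t ∉ D ∪ D' → t ≠ v → K.Reachable u t := by
    intro u t hu huv ht htv
    have hr := hDc.reachable_restrict_compl_union hD'c' hu ht
      (reachable_of_not_separates (h2 v u t) (by simpa using huv) (by simpa using htv))
    rw [restrict_restrict] at hr
    refine hr.mono (restrict_mono ?_)
    rintro w ⟨-, hw⟩ (rfl | rfl)
    exacts [hw (Or.inl haD), hw (Or.inr hbD')]
  have hrep : ∀ u, u ≠ a → u ≠ b → u ≠ v → ∃ r ∉ D ∪ D', r ≠ v ∧ K.Reachable u r := by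
    intro u hua hub huv
    by_cases huD : u ∈ D
    · exact ⟨c, by simp [hcD, hcD'], hcv, reachable_of_minimalFor h2 hmin haD hbD huD hua⟩
    by_cases huD' : u ∈ D'
    · have hr := reachable_of_minimalFor h2 hmin' hbD' haD' huD' hub
      rw [Set.pair_comm] at hr
      exact ⟨c', by simp [hc'D, hc'D'], hc'v, hr⟩
    exact ⟨u, by simp [huD, huD'], huv, .rfl⟩
  obtain ⟨w, hwa, hwb, hvw⟩ := exists_adj_ne_ne_of_three_le_degree hv a b
  have hwv : K.Adj w v := ⟨hvw.symm, by simp [hwa, hwb], by simp [hva.ne, hvb.ne]⟩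
  refine ⟨a, b, hva.symm, hvb.symm, fun hadj => hbD ?_, fun h => hbD (h ▸ Or.inr haD),
    fun u hua hub => ?_⟩
  · exact Or.inl (hDc ⟨hadj, fun h => haD.1 (Or.inl h), fun h => hbD'.1 (Or.inl h)⟩ haD
      fun h => hbD (Or.inr h))
  by_cases huv : u = v
  · exact huv ▸ .rfl
  obtain ⟨r, hr, hrv, hur⟩ := hrep u hua hub huv
  obtain ⟨r', hr', hr'v, hwr'⟩ := hrep w hwa hwb hvw.ne'
  exact hur.trans ((hout r r' hr hrv hr' hr'v).trans (hwr'.symm.trans hwv.reachable))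

lemma exists_isNonseparatingCherry_of_separates_pair (h2 : ∀ x y z, ¬ G.Separates {x} y z)
    {v x y z : V} (hv : 3 ≤ G.degree v) (hsep : G.Separates {v, x} y z) :
    ∃ a b, G.IsNonseparatingCherry a v b := by
  have hxv : x ≠ v := by rintro rfl; exact h2 x y z (by simpa using hsep)
  obtain ⟨⟨c, d⟩, hmin⟩ := exists_minimalFor_of_wellFoundedLT (G.IsCutSide v Set.univ)
    (fun p => G.componentAvoiding {v, p.1} p.2) ⟨(x, y), hxv, ⟨z, hsep⟩, Set.subset_univ _⟩
  obtain ⟨hcv, ⟨z₁, hd, hz₁, hdz₁⟩, -⟩ := hmin.1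
  have hside : G.IsCutSide v (insert c (G.componentAvoiding {v, c} d))ᶜ (c, z₁) := by
    refine ⟨hcv, ⟨d, hz₁, hd, fun h => hdz₁ h.symm⟩, ?_⟩
    rintro w ⟨hw, hwz₁⟩ (rfl | hwD)
    exacts [hw (Or.inr rfl), hdz₁ (hwD.2.symm.trans hwz₁)]
  obtain ⟨⟨c', d'⟩, hmin'⟩ := exists_minimalFor_of_wellFoundedLT _
    (fun p : V × V => G.componentAvoiding {v, p.1} p.2) ⟨_, hside⟩
  exact exists_isNonseparatingCherry_of_minimalFor h2 hv hmin hmin'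

lemma colorable_of_isRegularOfDegree {k : ℕ} (hk : 3 ≤ k) (hconn : G.Connected)
    (hreg : G.IsRegularOfDegree k) (hne : G ≠ ⊤) : G.Colorable k := by
  have hdeg : ∀ v, G.degree v ≤ k := fun v => (hreg.degree_eq v).le
  by_cases h2 : ∃ x y z, G.Separates {x} y z
  · obtain ⟨x, y, z, h⟩ := h2
    exact colorable_of_separates_singleton hconn hdeg h
  push Not at h2
  obtain ⟨a, v, b, h⟩ : ∃ a v b, G.IsNonseparatingCherry a v b := by
    by_cases h3 : ∃ x x' y z, G.Separates {x, x'} y z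
    · obtain ⟨x, x', y, z, h⟩ := h3
      obtain ⟨a, b, h⟩ :=
        exists_isNonseparatingCherry_of_separates_pair h2 (hreg.degree_eq x ▸ hk) h
      exact ⟨a, x, b, h⟩
    · push Not at h3
      exact hconn.exists_isNonseparatingCherry hne h3
  exact h.colorable hdeg

end Finite

end SimpleGraph

theorem brooks_general {V : Type*} [Fintype V]
    (Δ : SimpleGraph V) [DecidableRel Δ.Adj] (k : ℕ)
    (hconn : Δ.Connected) (hreg : Δ.IsRegularOfDegree k)
    (hcomplete : Δ ≠ ⊤)
    (hodd : ¬ ∃ n : ℕ, Odd n ∧ Nonempty (Δ ≃g SimpleGraph.cycleGraph n)) :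
    Δ.chromaticNumber ≤ (k : ℕ∞) := by
  classical
  refine SimpleGraph.Colorable.chromaticNumber_le ?_
  rcases Nat.lt_or_ge k 2 with hk | hk
  · exact absurd (hconn.eq_top_of_degree_le_one fun v => by rw [hreg.degree_eq]; omega) hcomplete
  rcases hk.eq_or_lt with rfl | hk
  · obtain ⟨n, ⟨e⟩⟩ := hconn.exists_iso_cycleGraph hreg
    have heven : Even n := Nat.not_odd_iff_even.mp fun h => hodd ⟨n, h, ⟨e⟩⟩
    exact .of_hom e.toEmbedding.toHom
      (by simpa using (SimpleGraph.cycleGraph.bicoloring_of_even n heven).colorable)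
  · exact SimpleGraph.colorable_of_isRegularOfDegree hk hconn hreg hcomplete

/-- Brooks' theorem: a connected finite simple graph that is regular of degree k,
is not complete, and is not an odd cycle, has chromatic number at most k. -/
theorem brooks {V : Type*} [Fintype V] [DecidableEq V]
    (Δ : SimpleGraph V) [DecidableRel Δ.Adj] (k : ℕ)
    (hconn : Δ.Connected) (hreg : Δ.IsRegularOfDegree k)
    (hcomplete : Δ ≠ ⊤)
    (hodd : ¬ ∃ n : ℕ, Odd n ∧ Nonempty (Δ ≃g SimpleGraph.cycleGraph n)) :
    Δ.chromaticNumber ≤ (k : ℕ∞) :=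
  brooks_general Δ k hconn hreg hcomplete hodd
end

section
/- There is no distance-regular graph with intersection array {55, 36, 11; 1, 4, 45}. -/
/-- `G` is a distance-regular graph of diameter 3 with intersection array
`{b 0, b 1, b 2; c 0, c 1, c 2}` (so `c 0 = c₁`, `c 1 = c₂`, `c 2 = c₃`):
for vertices `x, y` at distance `i`, the number of neighbors of `y` at
distance `i+1` from `x` is `b i`, and at distance `i-1` from `x` is `cᵢ`. -/
def IsDRG3 {V : Type*} [Fintype V] (G : SimpleGraph V) (b c : Fin 3 → ℕ) : Prop :=
  G.Connected ∧ (∀ x y : V, G.dist x y ≤ 3) ∧ (∃ x y : V, G.dist x y = 3) ∧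
  (∀ i : Fin 3, ∀ x y : V, G.dist x y = (i : ℕ) →
    Nat.card {z : V | G.Adj y z ∧ G.dist x z = (i : ℕ) + 1} = b i) ∧
  (∀ i : Fin 3, ∀ x y : V, G.dist x y = (i : ℕ) + 1 →
    Nat.card {z : V | G.Adj y z ∧ G.dist x z = (i : ℕ)} = c i)

namespace DRG55
open Matrix Finset BigOperators SimpleGraph
open scoped Classical

variable {V : Type} [Fintype V]

noncomputable def Am (G : SimpleGraph V) : Matrix V V ℝ :=
  Matrix.of fun u v => if G.Adj u v then (1:ℝ) else 0

noncomputable def Dk (G : SimpleGraph V) (k : ℕ) : Matrix V V ℝ :=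
  Matrix.of fun u v => if G.dist u v = k then (1:ℝ) else 0

noncomputable def Jm (V : Type) [Fintype V] : Matrix V V ℝ := Matrix.of fun _ _ => (1:ℝ)

lemma csum (p : V → Prop) (n : ℕ) (h : Nat.card {z : V | p z} = n) :
    (∑ z, if p z then (1:ℝ) else 0) = n := by
  have : ((Nat.card {z : V | p z} : ℝ)) = ∑ z, if p z then (1:ℝ) else 0 := by
    rw [Nat.card_eq_fintype_card, Fintype.card_subtype, Finset.sum_boole]
    norm_num [Set.mem_setOf_eq]
  rw [← this, h]

section Counting

variable (G : SimpleGraph V)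
variable (hconn : G.Connected) (hle : ∀ x y : V, G.dist x y ≤ 3)
variable (C55 : ∀ x y : V, G.dist x y = 1 → (∑ z, if G.Adj y z ∧ G.dist x z = 1 then (1:ℝ) else 0) = 18)

-- identities of indicator products
lemma ite_mul_ite (P Q : Prop) [Decidable P] [Decidable Q] :
    (if P then (1:ℝ) else 0) * (if Q then 1 else 0) = if P ∧ Q then 1 else 0 := by
  split_ifs with h1 h2 h3 h4 <;> simp_all

end Counting

/-- A*A = 55 I + 18 A + 4 D2 -/
lemma MA1 (G : SimpleGraph V) (hconn : G.Connected) (hle : ∀ x y : V, G.dist x y ≤ 3)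
    (Cdeg : ∀ y : V, (∑ z, if G.Adj y z ∧ G.dist y z = 1 then (1:ℝ) else 0) = 55)
    (Cb1 : ∀ x y : V, G.dist x y = 1 →
      (∑ z, if G.Adj y z ∧ G.dist x z = 2 then (1:ℝ) else 0) = 36)
    (Cc0 : ∀ x y : V, G.dist x y = 1 →
      (∑ z, if G.Adj y z ∧ G.dist x z = 0 then (1:ℝ) else 0) = 1)
    (Cc1 : ∀ x y : V, G.dist x y = 2 →
      (∑ z, if G.Adj y z ∧ G.dist x z = 1 then (1:ℝ) else 0) = 4) :
    Am G * Am G = (55:ℝ) • (1 : Matrix V V ℝ) + (18:ℝ) • Am G + (4:ℝ) • Dk G 2 := by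
  ext w z
  rw [Matrix.mul_apply]
  have hA : ∀ u, Am G w u * Am G u z
      = if G.Adj z u ∧ G.dist w u = 1 then (1:ℝ) else 0 := by
    intro u
    simp only [Am, Matrix.of_apply, ite_mul_ite]
    refine if_congr ?_ rfl rfl
    rw [G.adj_comm u z, ← SimpleGraph.dist_eq_one_iff_adj (u := w) (v := u)]
    exact and_comm
  simp only [hA]
  have hRHS : ((55:ℝ) • (1 : Matrix V V ℝ) + (18:ℝ) • Am G + (4:ℝ) • Dk G 2) w z
      = 55 * (if w = z then (1:ℝ) else 0) + 18 * (if G.Adj w z then (1:ℝ) else 0)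
        + 4 * (if G.dist w z = 2 then (1:ℝ) else 0) := by
    simp [Am, Dk, Matrix.one_apply]
  rw [hRHS]
  have hd := hle w z
  interval_cases hd2 : (G.dist w z)
  · -- dist 0 : w = z
    have hwz : w = z := (hconn.dist_eq_zero_iff).mp hd2
    subst hwz
    rw [Cdeg w]
    simp [G.irrefl, hd2]
  · -- dist 1
    have hne : w ≠ z := by
      intro h; subst h; rw [SimpleGraph.dist_self] at hd2; omega
    have hadj : G.Adj w z := SimpleGraph.dist_eq_one_iff_adj.mp hd2
    have h18 : (∑ u, if G.Adj z u ∧ G.dist w u = 1 then (1:ℝ) else 0) = 18 := by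
      have hpart : ∀ u, (if G.Adj z u ∧ G.dist w u = 1 then (1:ℝ) else 0)
          = (if G.Adj z u then (1:ℝ) else 0)
            - (if G.Adj z u ∧ G.dist w u = 0 then (1:ℝ) else 0)
            - (if G.Adj z u ∧ G.dist w u = 2 then (1:ℝ) else 0) := by
        intro u
        by_cases ha : G.Adj z u
        · have hu2 : G.dist w u ≤ 2 := by
            calc G.dist w u ≤ G.dist w z + G.dist z u := hconn.dist_triangle
            _ ≤ 1 + 1 := by
                rw [hd2, SimpleGraph.dist_eq_one_iff_adj.mpr ha]
          have : G.dist w u = 0 ∨ G.dist w u = 1 ∨ G.dist w u = 2 := by omega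
          rcases this with h | h | h <;> simp [ha, h]
        · simp [ha]
      simp only [hpart, Finset.sum_sub_distrib]
      have e1 : (∑ u, if G.Adj z u ∧ G.dist z u = 1 then (1:ℝ) else 0) = 55 := Cdeg z
      have e2 : (∑ u, if G.Adj z u then (1:ℝ) else 0)
          = ∑ u, if G.Adj z u ∧ G.dist z u = 1 then (1:ℝ) else 0 := by
        refine Finset.sum_congr rfl fun u _ => ?_
        refine if_congr ?_ rfl rfl
        constructor
        · intro h; exact ⟨h, SimpleGraph.dist_eq_one_iff_adj.mpr h⟩
        · intro h; exact h.1
      rw [e2, e1, Cc0 w z hd2, Cb1 w z hd2]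
      norm_num
    rw [h18]
    simp [hadj, hne]
  · -- dist 2
    rw [Cc1 w z hd2]
    have hne : w ≠ z := by
      intro h; subst h; rw [SimpleGraph.dist_self] at hd2; omega
    have hnadj : ¬ G.Adj w z := by
      intro h; rw [SimpleGraph.dist_eq_one_iff_adj.mpr h] at hd2; omega
    simp [hnadj, hne]
  · -- dist 3
    have hz : (∑ u, if G.Adj z u ∧ G.dist w u = 1 then (1:ℝ) else 0) = 0 := by
      refine Finset.sum_eq_zero fun u _ => ?_
      rw [if_neg]
      rintro ⟨ha, hd1⟩
      have : G.dist w z ≤ G.dist w u + G.dist u z := hconn.dist_triangle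
      rw [hd1, SimpleGraph.dist_eq_one_iff_adj.mpr (G.adj_comm z u |>.mp ha)] at this
      omega
    rw [hz]
    have hne : w ≠ z := by
      intro h; subst h; rw [SimpleGraph.dist_self] at hd2; omega
    have hnadj : ¬ G.Adj w z := by
      intro h; rw [SimpleGraph.dist_eq_one_iff_adj.mpr h] at hd2; omega
    simp [hnadj, hne]



lemma Cdeg' (G : SimpleGraph V)
    (Cdeg : ∀ y : V, (∑ z, if G.Adj y z ∧ G.dist y z = 1 then (1:ℝ) else 0) = 55) :
    ∀ y : V, (∑ z, if G.Adj y z then (1:ℝ) else 0) = 55 := by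
  intro y
  rw [← Cdeg y]
  refine Finset.sum_congr rfl fun u _ => ?_
  refine if_congr ?_ rfl rfl
  constructor
  · intro h; exact ⟨h, SimpleGraph.dist_eq_one_iff_adj.mpr h⟩
  · intro h; exact h.1

/-- A * D2 = 36 A + 40 D2 + 45 D3 -/
lemma MA2 (G : SimpleGraph V) (hconn : G.Connected) (hle : ∀ x y : V, G.dist x y ≤ 3)
    (Cdeg : ∀ y : V, (∑ z, if G.Adj y z ∧ G.dist y z = 1 then (1:ℝ) else 0) = 55)
    (Cb1 : ∀ x y : V, G.dist x y = 1 →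
      (∑ z, if G.Adj y z ∧ G.dist x z = 2 then (1:ℝ) else 0) = 36)
    (Cb2 : ∀ x y : V, G.dist x y = 2 →
      (∑ z, if G.Adj y z ∧ G.dist x z = 3 then (1:ℝ) else 0) = 11)
    (Cc1 : ∀ x y : V, G.dist x y = 2 →
      (∑ z, if G.Adj y z ∧ G.dist x z = 1 then (1:ℝ) else 0) = 4)
    (Cc2 : ∀ x y : V, G.dist x y = 3 →
      (∑ z, if G.Adj y z ∧ G.dist x z = 2 then (1:ℝ) else 0) = 45) :
    Am G * Dk G 2 = (36:ℝ) • Am G + (40:ℝ) • Dk G 2 + (45:ℝ) • Dk G 3 := by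
  ext w z
  rw [Matrix.mul_apply]
  have hA : ∀ u, Am G w u * Dk G 2 u z
      = if G.Adj w u ∧ G.dist z u = 2 then (1:ℝ) else 0 := by
    intro u
    simp only [Am, Dk, Matrix.of_apply, ite_mul_ite]
    refine if_congr (and_congr_right fun _ => ?_) rfl rfl
    rw [SimpleGraph.dist_comm (G := G) (u := u) (v := z)]
  simp only [hA]
  have hRHS : ((36:ℝ) • Am G + (40:ℝ) • Dk G 2 + (45:ℝ) • Dk G 3) w z
      = 36 * (if G.Adj w z then (1:ℝ) else 0)
        + 40 * (if G.dist w z = 2 then (1:ℝ) else 0)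
        + 45 * (if G.dist w z = 3 then (1:ℝ) else 0) := by
    simp [Am, Dk]
  rw [hRHS]
  have hd := hle w z
  interval_cases hd2 : (G.dist w z)
  · -- dist 0
    have hwz : w = z := (hconn.dist_eq_zero_iff).mp hd2
    subst hwz
    have h0 : (∑ u, if G.Adj w u ∧ G.dist w u = 2 then (1:ℝ) else 0) = 0 := by
      refine Finset.sum_eq_zero fun u _ => ?_
      rw [if_neg]
      rintro ⟨ha, hdu⟩
      rw [SimpleGraph.dist_eq_one_iff_adj.mpr ha] at hdu
      omega
    rw [h0]
    simp [G.irrefl]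
  · -- dist 1
    have hadj : G.Adj w z := SimpleGraph.dist_eq_one_iff_adj.mp hd2
    have h36 := Cb1 z w (by rw [SimpleGraph.dist_comm]; exact hd2)
    rw [h36]
    have hne : w ≠ z := fun h => by subst h; rw [SimpleGraph.dist_self] at hd2; omega
    simp [hadj]
  · -- dist 2
    have hdzw : G.dist z w = 2 := by rw [SimpleGraph.dist_comm]; exact hd2
    have hnadj : ¬ G.Adj w z := by
      intro h; rw [SimpleGraph.dist_eq_one_iff_adj.mpr h] at hd2; omega
    have hpart : ∀ u, (if G.Adj w u ∧ G.dist z u = 2 then (1:ℝ) else 0)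
        = (if G.Adj w u then (1:ℝ) else 0)
          - (if G.Adj w u ∧ G.dist z u = 1 then (1:ℝ) else 0)
          - (if G.Adj w u ∧ G.dist z u = 3 then (1:ℝ) else 0) := by
      intro u
      by_cases ha : G.Adj w u
      · have hub : G.dist z u ≤ 3 := hle z u
        have hu0 : G.dist z u ≠ 0 := by
          intro h0
          have hz : z = u := (hconn.dist_eq_zero_iff).mp h0
          rw [← hz] at ha
          exact hnadj ha
        have : G.dist z u = 1 ∨ G.dist z u = 2 ∨ G.dist z u = 3 := by omega
        rcases this with h | h | h <;> simp [ha, h]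
      · simp [ha]
    simp only [hpart, Finset.sum_sub_distrib]
    rw [Cdeg' G Cdeg w, Cc1 z w hdzw, Cb2 z w hdzw]
    simp only [hnadj, if_false, if_true]
    norm_num
  · -- dist 3
    have h45 := Cc2 z w (by rw [SimpleGraph.dist_comm]; exact hd2)
    rw [h45]
    have hnadj : ¬ G.Adj w z := by
      intro h; rw [SimpleGraph.dist_eq_one_iff_adj.mpr h] at hd2; omega
    simp [hnadj]

lemma Jsplit (G : SimpleGraph V) (hconn : G.Connected) (hle : ∀ x y : V, G.dist x y ≤ 3) :
    Jm V = (1 : Matrix V V ℝ) + Am G + Dk G 2 + Dk G 3 := by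
  ext w z
  have hRHS : ((1 : Matrix V V ℝ) + Am G + Dk G 2 + Dk G 3) w z
      = (if w = z then (1:ℝ) else 0) + (if G.Adj w z then (1:ℝ) else 0)
        + (if G.dist w z = 2 then (1:ℝ) else 0) + (if G.dist w z = 3 then (1:ℝ) else 0) := by
    simp [Am, Dk, Matrix.one_apply]
  rw [hRHS]
  have hJ : Jm V w z = (1:ℝ) := rfl
  rw [hJ]
  have hd := hle w z
  interval_cases hd2 : (G.dist w z)
  · have hwz : w = z := (hconn.dist_eq_zero_iff).mp hd2
    subst hwz
    simp [G.irrefl]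
  · have hne : w ≠ z := fun h => by subst h; rw [SimpleGraph.dist_self] at hd2; omega
    have hadj : G.Adj w z := SimpleGraph.dist_eq_one_iff_adj.mp hd2
    simp [hne, hadj]
  · have hne : w ≠ z := fun h => by subst h; rw [SimpleGraph.dist_self] at hd2; omega
    have hnadj : ¬ G.Adj w z := by
      intro h; rw [SimpleGraph.dist_eq_one_iff_adj.mpr h] at hd2; omega
    simp [hne, hnadj]
  · have hne : w ≠ z := fun h => by subst h; rw [SimpleGraph.dist_self] at hd2; omega
    have hnadj : ¬ G.Adj w z := by
      intro h; rw [SimpleGraph.dist_eq_one_iff_adj.mpr h] at hd2; omega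
    simp [hne, hnadj]

lemma rowAJ (G : SimpleGraph V)
    (Cdeg : ∀ y : V, (∑ z, if G.Adj y z ∧ G.dist y z = 1 then (1:ℝ) else 0) = 55) :
    Am G * Jm V = (55:ℝ) • Jm V := by
  ext w z
  rw [Matrix.mul_apply]
  have : ∀ u, Am G w u * Jm V u z = if G.Adj w u then (1:ℝ) else 0 := by
    intro u
    have : Jm V u z = 1 := rfl
    rw [this, mul_one]
    rfl
  simp only [this]
  rw [Cdeg' G Cdeg w]
  simp [Jm]

lemma rowJA (G : SimpleGraph V)
    (Cdeg : ∀ y : V, (∑ z, if G.Adj y z ∧ G.dist y z = 1 then (1:ℝ) else 0) = 55) :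
    Jm V * Am G = (55:ℝ) • Jm V := by
  ext w z
  rw [Matrix.mul_apply]
  have : ∀ u, Jm V w u * Am G u z = if G.Adj z u then (1:ℝ) else 0 := by
    intro u
    have h1 : Jm V w u = 1 := rfl
    rw [h1, one_mul]
    simp only [Am, Matrix.of_apply]
    refine if_congr ?_ rfl rfl
    exact G.adj_comm u z
  simp only [this]
  rw [Cdeg' G Cdeg z]
  simp [Jm]

/-- the key algebraic identity: G² = 96 G -/
lemma Gsq (A D2 D3 J : Matrix V V ℝ)
    (h1 : A * A = (55:ℝ) • (1 : Matrix V V ℝ) + (18:ℝ) • A + (4:ℝ) • D2)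
    (h2 : A * D2 = (36:ℝ) • A + (40:ℝ) • D2 + (45:ℝ) • D3)
    (h3 : J = (1 : Matrix V V ℝ) + A + D2 + D3)
    (h4 : A * J = (55:ℝ) • J) (h5 : J * A = (55:ℝ) • J) :
    (A * A - (18:ℝ) • A - (19:ℝ) • (1 : Matrix V V ℝ) - (3:ℝ) • J)
        * (A * A - (18:ℝ) • A - (19:ℝ) • (1 : Matrix V V ℝ) - (3:ℝ) • J)
      = (96:ℝ) • (A * A - (18:ℝ) • A - (19:ℝ) • (1 : Matrix V V ℝ) - (3:ℝ) • J) := by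
  have hD3 : D3 = J - 1 - A - D2 := by rw [h3]; abel
  have hD2' : D2 = (1/4 : ℝ) • (A * A) - (55/4 : ℝ) • (1 : Matrix V V ℝ) - (9/2 : ℝ) • A := by
    rw [h1]; module
  -- H3 : A³
  have H3 : A * A * A = (13:ℝ) • (A * A) + (109:ℝ) • A + (95:ℝ) • (1 : Matrix V V ℝ)
      + (180:ℝ) • J := by
    calc A * A * A = A * (A * A) := by rw [mul_assoc]
    _ = A * ((55:ℝ) • (1 : Matrix V V ℝ) + (18:ℝ) • A + (4:ℝ) • D2) := by rw [h1]
    _ = (55:ℝ) • A + (18:ℝ) • (A * A) + (4:ℝ) • (A * D2) := by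
        simp only [mul_add, mul_smul_comm, mul_one]
    _ = (55:ℝ) • A + (18:ℝ) • (A * A)
        + (4:ℝ) • ((36:ℝ) • A + (40:ℝ) • D2 + (45:ℝ) • D3) := by rw [h2]
    _ = (13:ℝ) • (A * A) + (109:ℝ) • A + (95:ℝ) • (1 : Matrix V V ℝ) + (180:ℝ) • J := by
        rw [hD3, hD2']
        module
  -- A^4
  have hAAJ : A * A * J = (3025:ℝ) • J := by
    rw [mul_assoc, h4, mul_smul_comm, h4, smul_smul]; norm_num
  have hJAA : J * (A * A) = (3025:ℝ) • J := by
    rw [← mul_assoc, h5, smul_mul_assoc, h5, smul_smul]; norm_num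
  have hJJ : J * J = (672:ℝ) • J := by
    have hA3J : (A * A * A) * J = (166375:ℝ) • J := by
      rw [mul_assoc, h4, mul_smul_comm, hAAJ, smul_smul]; norm_num
    have hexp : ((13:ℝ) • (A * A) + (109:ℝ) • A + (95:ℝ) • (1 : Matrix V V ℝ)
        + (180:ℝ) • J) * J
        = (45415:ℝ) • J + (180:ℝ) • (J * J) := by
      simp only [add_mul, smul_mul_assoc, hAAJ, h4, one_mul, smul_smul]
      module
    rw [H3, hexp] at hA3J
    have h180 : (180:ℝ) • (J * J) = (120960:ℝ) • J := by
      have := hA3J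
      have : (180:ℝ) • (J * J) = (166375:ℝ) • J - (45415:ℝ) • J := by
        rw [← this]; abel
      rw [this]; module
    have := congrArg (fun M : Matrix V V ℝ => (1/180 : ℝ) • M) h180
    simp only [smul_smul] at this
    norm_num at this
    exact this
  have H4 : A * A * (A * A) = (278:ℝ) • (A * A) + (1512:ℝ) • A
      + (1235:ℝ) • (1 : Matrix V V ℝ) + (12240:ℝ) • J := by
    calc A * A * (A * A) = (A * A * A) * A := (mul_assoc _ _ _).symm
    _ = ((13:ℝ) • (A * A) + (109:ℝ) • A + (95:ℝ) • (1 : Matrix V V ℝ)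
        + (180:ℝ) • J) * A := by rw [H3]
    _ = (13:ℝ) • (A * A * A) + (109:ℝ) • (A * A) + (95:ℝ) • A + (9900 : ℝ) • J := by
        simp only [add_mul, smul_mul_assoc, one_mul, h5, smul_smul]
        module
    _ = _ := by
        rw [H3]
        module
  have H3' : A * (A * A) = (13:ℝ) • (A * A) + (109:ℝ) • A + (95:ℝ) • (1 : Matrix V V ℝ)
      + (180:ℝ) • J := by rw [← mul_assoc]; exact H3
  -- now expand G²
  have hexpand : (A * A - (18:ℝ) • A - (19:ℝ) • (1 : Matrix V V ℝ) - (3:ℝ) • J)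
      * (A * A - (18:ℝ) • A - (19:ℝ) • (1 : Matrix V V ℝ) - (3:ℝ) • J)
      = (A * A * (A * A)) - (18:ℝ) • (A * A * A) - (19:ℝ) • (A * A) - (3:ℝ) • (A * A * J)
        - (18:ℝ) • (A * (A * A)) + (324:ℝ) • (A * A) + (342:ℝ) • A + (54:ℝ) • (A * J)
        - (19:ℝ) • (A * A) + (342:ℝ) • A + (361:ℝ) • (1 : Matrix V V ℝ) + (57:ℝ) • J
        - (3:ℝ) • (J * (A * A)) + (54:ℝ) • (J * A) + (57:ℝ) • J + (9:ℝ) • (J * J) := by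
    simp only [sub_mul, mul_sub, smul_mul_assoc, mul_smul_comm, smul_smul, mul_one, one_mul]
    module
  rw [hexpand, H4, H3, H3', hAAJ, hJAA, hJJ, h4, h5]
  module

def QF (M : Matrix V V ℝ) (v : V → ℝ) : ℝ := ∑ a, ∑ b, v a * M a b * v b

lemma QF_add (M N : Matrix V V ℝ) (v : V → ℝ) : QF (M + N) v = QF M v + QF N v := by
  unfold QF
  rw [← Finset.sum_add_distrib]
  refine Finset.sum_congr rfl fun a _ => ?_
  rw [← Finset.sum_add_distrib]
  exact Finset.sum_congr rfl fun b _ => by simp [Matrix.add_apply]; ring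

lemma QF_sub (M N : Matrix V V ℝ) (v : V → ℝ) : QF (M - N) v = QF M v - QF N v := by
  unfold QF
  rw [← Finset.sum_sub_distrib]
  refine Finset.sum_congr rfl fun a _ => ?_
  rw [← Finset.sum_sub_distrib]
  exact Finset.sum_congr rfl fun b _ => by simp [Matrix.sub_apply]; ring

lemma QF_smul (c : ℝ) (M : Matrix V V ℝ) (v : V → ℝ) : QF (c • M) v = c * QF M v := by
  unfold QF
  rw [Finset.mul_sum]
  refine Finset.sum_congr rfl fun a _ => ?_
  rw [Finset.mul_sum]
  exact Finset.sum_congr rfl fun b _ => by simp [Matrix.smul_apply]; ring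

lemma QF_one [DecidableEq V] (v : V → ℝ) :
    QF (1 : Matrix V V ℝ) v = ∑ a, v a * v a := by
  unfold QF
  refine Finset.sum_congr rfl fun a _ => ?_
  simp [Matrix.one_apply, mul_ite, ite_mul, mul_zero, zero_mul, mul_one,
    Finset.sum_ite_eq]

lemma QF_mul_self_nonneg (M : Matrix V V ℝ) (hsym : ∀ a b, M a b = M b a) (v : V → ℝ) :
    0 ≤ QF (M * M) v := by
  have key : QF (M * M) v = ∑ t, (∑ a, M t a * v a) * (∑ a, M t a * v a) := by
    unfold QF
    have lhs : ∀ a, ∑ b, v a * (M * M) a b * v b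
        = ∑ t, ∑ b, (M t a * v a) * (M t b * v b) := by
      intro a
      rw [Finset.sum_comm]
      refine Finset.sum_congr rfl fun b _ => ?_
      rw [Matrix.mul_apply, Finset.mul_sum, Finset.sum_mul]
      refine Finset.sum_congr rfl fun t _ => ?_
      rw [hsym a t]
      ring
    simp only [lhs]
    rw [Finset.sum_comm]
    refine Finset.sum_congr rfl fun t _ => ?_
    rw [Finset.sum_mul_sum]
  rw [key]
  exact Finset.sum_nonneg fun t _ => mul_self_nonneg _

lemma qf_M_nonneg [DecidableEq V] (A D2 J : Matrix V V ℝ) (x : V)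
    (hAsym : ∀ a b, A a b = A b a)
    (hA01 : ∀ a b, A a b = 0 ∨ A a b = 1)
    (hAdiag : ∀ a, A a a = 0)
    (hJ : ∀ a b, J a b = 1)
    (MA1 : A * A = (55:ℝ) • (1 : Matrix V V ℝ) + (18:ℝ) • A + (4:ℝ) • D2)
    (hG : (A * A - (18:ℝ) • A - (19:ℝ) • (1 : Matrix V V ℝ) - (3:ℝ) • J)
        * (A * A - (18:ℝ) • A - (19:ℝ) • (1 : Matrix V V ℝ) - (3:ℝ) • J)
        = (96:ℝ) • (A * A - (18:ℝ) • A - (19:ℝ) • (1 : Matrix V V ℝ) - (3:ℝ) • J))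
    (heD2 : ∀ u, A x u * D2 x u = 0)
    (hkey : ∀ u z, A x u * A x z * D2 u z
        = A x u * A x z * (1 - (if u = z then (1:ℝ) else 0) - A u z))
    (hesum : ∑ u, A x u = 55) :
    ∀ v : V → ℝ, 0 ≤ QF ((8:ℝ) • Matrix.diagonal (fun u => A x u)
      - Matrix.of (fun u z => A x u * A u z * A x z)
      + (18/55 : ℝ) • Matrix.of (fun u z => A x u * A x z)) v := by
  intro v
  have he01 : ∀ u, A x u = 0 ∨ A x u = 1 := fun u => hA01 x u
  have hex : A x x = 0 := hAdiag x
  set s : ℝ := ∑ u, A x u * v u with hs_def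
  set v' : V → ℝ := fun u => A x u * (v u - s / 55) with hv'_def
  have hv'x : v' x = 0 := by rw [hv'_def]; simp [hex]
  have habs : ∀ u, A x u * v' u = v' u := by
    intro u
    rcases he01 u with h | h <;> simp [hv'_def, h]
  have hv'sum : ∑ u, v' u = 0 := by
    have : ∀ u, v' u = A x u * v u - A x u * (s / 55) := by
      intro u; rw [hv'_def]; ring
    simp only [this, Finset.sum_sub_distrib]
    rw [← hs_def, ← Finset.sum_mul, hesum]
    ring
  set q : ℝ := ∑ u, ∑ z, v' u * A u z * v' z with hq_def
  set n2 : ℝ := ∑ u, v' u * v' u with hn2_def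
  -- row sums of A*A at x
  have hAArow : ∀ z, (∑ u, A x u * A u z)
      = 55 * (if x = z then (1:ℝ) else 0) + 18 * A x z + 4 * D2 x z := by
    intro z
    have h1 : (A * A) x z = ∑ u, A x u * A u z := Matrix.mul_apply
    have h2 := congrArg (fun M : Matrix V V ℝ => M x z) MA1
    simp only [Matrix.add_apply, Matrix.smul_apply, Matrix.one_apply, smul_eq_mul] at h2
    rw [← h1, h2]
  -- ∑∑ e A e = 990
  have hEAE : ∑ z, (∑ u, A x u * A u z) * A x z = 990 := by
    simp only [hAArow]
    have : ∀ z, (55 * (if x = z then (1:ℝ) else 0) + 18 * A x z + 4 * D2 x z) * A x z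
        = 55 * (if x = z then A x z else 0) + 18 * (A x z * A x z)
          + 4 * (A x z * D2 x z) := by
      intro z; split_ifs <;> ring
    simp only [this]
    have hee : ∀ z, A x z * A x z = A x z := by
      intro z; rcases he01 z with h | h <;> rw [h] <;> ring
    simp only [heD2, hee, mul_zero]
    simp only [Finset.sum_add_distrib, ← Finset.mul_sum]
    rw [hesum]
    simp only [Finset.sum_ite_eq, mem_univ, if_true, hex, mul_zero, add_zero, zero_add]
    norm_num
  -- CROSS = 0
  have hcross : ∑ z, (∑ u, A x u * A u z) * v' z = 0 := by
    simp only [hAArow]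
    have : ∀ z, (55 * (if x = z then (1:ℝ) else 0) + 18 * A x z + 4 * D2 x z) * v' z
        = 55 * (if x = z then v' z else 0) + 18 * (A x z * v' z)
          + 4 * ((A x z * D2 x z) * (v z - s / 55)) := by
      intro z
      have : D2 x z * v' z = (A x z * D2 x z) * (v z - s/55) := by
        rw [hv'_def]; ring
      split_ifs with h <;> rw [← this] <;> ring
    simp only [this, heD2, zero_mul, mul_zero]
    simp only [habs]
    simp only [Finset.sum_add_distrib, ← Finset.mul_sum]
    rw [hv'sum]
    simp only [Finset.sum_ite_eq, mem_univ, if_true, hv'x, mul_zero, add_zero, zero_add]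
    simp
  -- S2, S3, S4 : double-sum versions
  have S2 : ∑ u, ∑ z, A x u * A u z * v' z = 0 := by
    rw [Finset.sum_comm]
    calc ∑ z, ∑ u, A x u * A u z * v' z = ∑ z, (∑ u, A x u * A u z) * v' z := by
          refine Finset.sum_congr rfl fun z _ => ?_
          rw [Finset.sum_mul]
    _ = 0 := hcross
  have S3 : ∑ u, ∑ z, v' u * A u z * A x z = 0 := by
    have hpt : ∀ u z, v' u * A u z * A x z = A x z * A z u * v' u := by
      intro u z; rw [hAsym u z]; ring
    simp only [hpt]
    rw [Finset.sum_comm]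
    exact S2
  have S4 : ∑ u, ∑ z, A x u * A u z * A x z = 990 := by
    rw [Finset.sum_comm]
    calc ∑ z, ∑ u, A x u * A u z * A x z = ∑ z, (∑ u, A x u * A u z) * A x z := by
          refine Finset.sum_congr rfl fun z _ => ?_
          rw [Finset.sum_mul]
    _ = 990 := hEAE
  -- QF of B
  have hQFB : QF (Matrix.of fun u z => A x u * A u z * A x z) v
      = q + (18/55) * (s * s) := by
    unfold QF
    have h1 : ∀ t, A x t * v t = v' t + (s/55) * A x t := by
      intro t; rw [hv'_def]; ring
    have hpt : ∀ u z, v u * (Matrix.of fun u z => A x u * A u z * A x z) u z * v z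
        = v' u * A u z * v' z + (s/55) * (A x u * A u z * v' z)
          + (s/55) * (v' u * A u z * A x z)
          + ((s/55) * (s/55)) * (A x u * A u z * A x z) := by
      intro u z
      have e1 : v u * (Matrix.of fun u z => A x u * A u z * A x z) u z * v z
          = (A x u * v u) * A u z * (A x z * v z) := by
        simp only [Matrix.of_apply]; ring
      rw [e1, h1 u, h1 z]
      ring
    simp only [hpt, Finset.sum_add_distrib, ← Finset.mul_sum]
    rw [S2, S3, S4, ← hq_def]
    ring
  -- QF of P
  have hQFP : QF (Matrix.diagonal (fun u => A x u)) v = ∑ u, A x u * (v u * v u) := by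
    unfold QF
    refine Finset.sum_congr rfl fun a _ => ?_
    have : ∀ b, v a * Matrix.diagonal (fun u => A x u) a b * v b
        = if a = b then A x a * (v a * v b) else 0 := by
      intro b
      rw [Matrix.diagonal_apply]
      split_ifs <;> ring
    simp only [this, Finset.sum_ite_eq, mem_univ, if_true]
  -- QF of K
  have hQFK : QF (Matrix.of fun u z => A x u * A x z) v = s * s := by
    unfold QF
    have hpt : ∀ u z, v u * (Matrix.of fun u z => A x u * A x z) u z * v z
        = (A x u * v u) * (A x z * v z) := by
      intro u z; simp only [Matrix.of_apply]; ring
    simp only [hpt]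
    rw [← Finset.sum_mul_sum, ← hs_def]
  -- norm split
  have hn2split : ∑ u, A x u * (v u * v u) = n2 + (s * s) / 55 := by
    have hpt : ∀ u, A x u * (v u * v u)
        = v' u * v' u + (2 * s / 55) * (A x u * v u) - ((s * s) / 3025) * A x u := by
      intro u
      rcases he01 u with h | h <;> simp only [hv'_def, h] <;> ring
    simp only [hpt, Finset.sum_add_distrib, Finset.sum_sub_distrib, ← Finset.mul_sum]
    rw [← hs_def, hesum, ← hn2_def]
    ring
  -- the local eigenvalue bound: q ≤ 8 n2
  have hAAsym : ∀ a b, (A * A) a b = (A * A) b a := by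
    intro a b
    simp only [Matrix.mul_apply]
    refine Finset.sum_congr rfl fun t _ => ?_
    rw [hAsym a t, hAsym t b]; ring
  have hGsym : ∀ a b, (A * A - (18:ℝ) • A - (19:ℝ) • (1 : Matrix V V ℝ) - (3:ℝ) • J) a b
      = (A * A - (18:ℝ) • A - (19:ℝ) • (1 : Matrix V V ℝ) - (3:ℝ) • J) b a := by
    intro a b
    simp only [Matrix.sub_apply, Matrix.smul_apply, smul_eq_mul, hAAsym a b, hAsym a b,
      hJ, Matrix.one_apply]
    by_cases h : a = b
    · subst h; simp
    · rw [if_neg h, if_neg (Ne.symm h)]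
  have hQFGnn : 0 ≤ QF (A * A - (18:ℝ) • A - (19:ℝ) • (1 : Matrix V V ℝ) - (3:ℝ) • J) v' := by
    have h1 := QF_mul_self_nonneg _ hGsym v'
    rw [hG, QF_smul] at h1
    linarith
  have hQFAv' : QF A v' = q := by rw [hq_def]; rfl
  have hQF1v' : QF (1 : Matrix V V ℝ) v' = n2 := by rw [QF_one, hn2_def]
  have hQFJv' : QF J v' = 0 := by
    unfold QF
    have hpt : ∀ u z, v' u * J u z * v' z = v' u * v' z := by
      intro u z; rw [hJ]; ring
    simp only [hpt]
    rw [← Finset.sum_mul_sum, hv'sum]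
    ring
  have hQFD2v' : QF D2 v' = - n2 - q := by
    have hpt : ∀ u z, v' u * D2 u z * v' z
        = v' u * v' z - (if u = z then v' u * v' z else 0) - v' u * A u z * v' z := by
      intro u z
      have hform : v' u * D2 u z * v' z
          = ((v u - s/55) * (v z - s/55)) * (A x u * A x z * D2 u z) := by
        simp only [hv'_def]; ring
      rw [hform, hkey u z]
      by_cases huz : u = z
      · subst huz
        simp only [eq_self_iff_true, if_true, if_pos rfl, hAdiag u, hv'_def]
        ring
      · simp only [if_neg huz, hv'_def]
        ring
    unfold QF
    simp only [hpt, Finset.sum_sub_distrib]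
    have d1 : ∑ u, ∑ z, v' u * v' z = 0 := by
      rw [← Finset.sum_mul_sum, hv'sum]; ring
    have d2 : ∑ u : V, ∑ z : V, (if u = z then v' u * v' z else 0) = n2 := by
      have : ∀ u : V, ∑ z : V, (if u = z then v' u * v' z else 0) = v' u * v' u := by
        intro u; rw [Finset.sum_ite_eq univ u (fun z => v' u * v' z)]; simp
      simp only [this, ← hn2_def]
    rw [d1, d2, ← hq_def]
    ring
  have hQFAAv' : QF (A * A) v' = 55 * n2 + 18 * q + 4 * QF D2 v' := by
    rw [MA1, QF_add, QF_add, QF_smul, QF_smul, QF_smul, hQF1v', hQFAv']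
  have hqbound : q ≤ 8 * n2 := by
    have hexpand : QF (A * A - (18:ℝ) • A - (19:ℝ) • (1 : Matrix V V ℝ) - (3:ℝ) • J) v'
        = QF (A * A) v' - 18 * QF A v' - 19 * QF (1 : Matrix V V ℝ) v' - 3 * QF J v' := by
      rw [QF_sub, QF_sub, QF_sub, QF_smul, QF_smul, QF_smul]
    rw [hexpand, hQFAAv', hQFAv', hQF1v', hQFJv', hQFD2v'] at hQFGnn
    linarith
  -- final assembly
  have hfin : QF ((8:ℝ) • Matrix.diagonal (fun u => A x u)
      - Matrix.of (fun u z => A x u * A u z * A x z)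
      + (18/55 : ℝ) • Matrix.of (fun u z => A x u * A x z)) v
      = 8 * (n2 + (s * s) / 55) - (q + (18/55) * (s * s)) + (18/55) * (s * s) := by
    rw [QF_add, QF_sub, QF_smul, QF_smul, hQFP, hn2split, hQFB, hQFK]
  rw [hfin]
  have hs2 : 0 ≤ s * s := mul_self_nonneg s
  linarith
lemma trace_MDD_nonneg (M D : Matrix V V ℝ) (hDsym : ∀ a b, D a b = D b a)
    (hM : ∀ v : V → ℝ, 0 ≤ QF M v) : 0 ≤ Matrix.trace (M * D * D) := by
  have h1 : Matrix.trace (M * D * D) = Matrix.trace (D * M * D) := by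
    rw [Matrix.trace_mul_cycle]
  rw [h1]
  have h3 : ∀ i, (D * M * D) i i = QF M (fun a => D a i) := by
    intro i
    simp only [QF, Matrix.mul_apply, Finset.sum_mul]
    rw [Finset.sum_comm]
    simp only [hDsym i]
  have h2 : Matrix.trace (D * M * D) = ∑ i, QF M (fun a => D a i) := by
    simp only [Matrix.trace, Matrix.diag, h3]
  rw [h2]
  exact Finset.sum_nonneg fun i _ => hM _

lemma upper_bound (B P K : Matrix V V ℝ)
    (hPP : P * P = P) (hPB : P * B = B) (hBP : B * P = B)
    (hPK : P * K = K) (hKP : K * P = K)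
    (hKK : K * K = (55:ℝ) • K) (hBK : B * K = (18:ℝ) • K) (hKB : K * B = (18:ℝ) • K)
    (hBsym : ∀ a b, B a b = B b a) (hPsym : ∀ a b, P a b = P b a) (hKsym : ∀ a b, K a b = K b a)
    (hM : ∀ v : V → ℝ, 0 ≤ QF ((8:ℝ) • P - B + (18/55 : ℝ) • K) v)
    (htB : Matrix.trace B = 0) (htB2 : Matrix.trace (B * B) = 990)
    (htP : Matrix.trace P = 55) (htK : Matrix.trace K = 55) :
    25 * Matrix.trace (B * B * B) ≤ 243198 := by
  set M : Matrix V V ℝ := (8:ℝ) • P - B + (18/55 : ℝ) • K with hMdef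
  set D : Matrix V V ℝ := (5:ℝ) • B + (9:ℝ) • P - (18/11 : ℝ) • K with hDdef
  have hDsym : ∀ a b, D a b = D b a := by
    intro a b
    simp [hDdef, Matrix.add_apply, Matrix.sub_apply, Matrix.smul_apply,
      hBsym a b, hPsym a b, hKsym a b]
  have hB2K : B * B * K = (324:ℝ) • K := by
    rw [mul_assoc, hBK, mul_smul_comm, hBK, smul_smul]; norm_num
  have hB2P : B * B * P = B * B := by rw [mul_assoc, hBP]
  have key : M * D = (-5 : ℝ) • (B * B) + (31:ℝ) • B + (72:ℝ) • P + (1062/55 : ℝ) • K := by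
    rw [hMdef, hDdef]
    simp only [Matrix.add_mul, Matrix.sub_mul, Matrix.mul_add, Matrix.mul_sub,
      smul_mul_assoc, mul_smul_comm, hPP, hPB, hBP, hPK, hKP, hKK, hBK, hKB, smul_smul]
    module
  have key2 : M * D * D = (-25 : ℝ) • (B * B * B) + (110:ℝ) • (B * B) + (639:ℝ) • B
      + (648:ℝ) • P + (98658/55 : ℝ) • K := by
    rw [key, hDdef]
    simp only [Matrix.add_mul, Matrix.sub_mul, Matrix.mul_add, Matrix.mul_sub,
      smul_mul_assoc, mul_smul_comm, hPP, hPB, hBP, hPK, hKP, hKK, hBK, hKB, hB2K, hB2P,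
      smul_smul, ← mul_assoc]
    module
  have h0 : (0:ℝ) ≤ Matrix.trace (M * D * D) := trace_MDD_nonneg M D hDsym hM
  rw [key2] at h0
  simp only [Matrix.trace_add, Matrix.trace_smul, Matrix.trace_sub, htB, htB2, htP, htK,
    smul_eq_mul] at h0
  linarith
lemma lower_bound (B : Matrix V V ℝ) (e : V → ℝ)
    (he : ∀ u, e u = 0 ∨ e u = 1)
    (hBsym : ∀ u w, B u w = B w u)
    (hB01 : ∀ u w, B u w = 0 ∨ B u w = 1)
    (hBdiag : ∀ u, B u u = 0)
    (habs : ∀ u w, e u * e w * B u w = B u w)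
    (hBrow : ∀ u, ∑ w, B u w = 18 * e u)
    (hesum : ∑ u, e u = 55)
    (hQ3 : ∀ u w, u ≠ w → B u w = 0 → e u * e w = 1 → (B * B) u w ≤ 3) :
    (10725 : ℝ) ≤ Matrix.trace (B * B * B) := by
  classical
  set Q : Matrix V V ℝ := B * B with hQdef
  have habs2 : ∀ u t, B u t * e t = B u t := by
    intro u t
    rcases he t with h | h
    · rw [h, mul_zero, ← habs u t, h]; ring
    · rw [h, mul_one]
  have habs1 : ∀ u t, e u * B u t = B u t := by
    intro u t
    rcases he u with h | h
    · rw [h, zero_mul, ← habs u t, h]; ring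
    · rw [h, one_mul]
  have hQrow : ∀ u, ∑ w, Q u w = 324 * e u := by
    intro u
    have : ∀ w, Q u w = ∑ t, B u t * B t w := fun w => Matrix.mul_apply
    simp only [this]
    rw [Finset.sum_comm]
    have : ∀ t, ∑ w, B u t * B t w = B u t * (18 * e t) := by
      intro t; rw [← Finset.mul_sum, hBrow t]
    simp only [this]
    have : ∀ t, B u t * (18 * e t) = 18 * B u t := by
      intro t; rw [mul_comm (18:ℝ) (e t), ← mul_assoc, habs2]; ring
    simp only [this]
    rw [← Finset.mul_sum, hBrow u]; ring
  have hBsumall : ∑ u, ∑ w, B u w = 990 := by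
    simp only [hBrow]
    rw [← Finset.mul_sum, hesum]; norm_num
  have hQsumall : ∑ u, ∑ w, Q u w = 17820 := by
    simp only [hQrow]
    rw [← Finset.mul_sum, hesum]; norm_num
  have htraceQ : ∑ u, Q u u = 990 := by
    have : ∀ u, Q u u = ∑ t, B u t := by
      intro u
      rw [hQdef, Matrix.mul_apply]
      refine Finset.sum_congr rfl fun t _ => ?_
      rw [hBsym t u]
      rcases hB01 u t with h | h <;> rw [h] <;> ring
    simp only [this, hBrow]
    rw [← Finset.mul_sum, hesum]; norm_num
  have hT : Matrix.trace (B * B * B) = ∑ u, ∑ w, Q u w * B u w := by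
    simp only [Matrix.trace, Matrix.diag, Matrix.mul_apply, hQdef]
    refine Finset.sum_congr rfl fun u _ => Finset.sum_congr rfl fun w _ => ?_
    rw [hBsym w u]
  have hQ0 : ∀ u w, e u * e w = 0 → Q u w = 0 := by
    intro u w h
    rw [hQdef, Matrix.mul_apply]
    refine Finset.sum_eq_zero fun t _ => ?_
    rw [← habs u t, ← habs t w]
    rcases mul_eq_zero.mp h with h0 | h0 <;> rw [h0] <;> ring
  have claim : ∀ u w, Q u w ≤ B u w * Q u w + 3 * (e u * e w) * (1 - B u w)
      + (if u = w then Q u w else 0) := by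
    intro u w
    by_cases huw : u = w
    · subst huw
      have h0 : (0:ℝ) ≤ e u * e u := by rcases he u with h | h <;> rw [h] <;> norm_num
      simp only [hBdiag, zero_mul, mul_zero, sub_zero, zero_add, eq_self_iff_true,
        if_true, mul_one]
      nlinarith
    · simp only [if_neg huw]
      rcases hB01 u w with hb | hb
      · rw [hb]
        by_cases hee : e u * e w = 1
        · have := hQ3 u w huw hb hee
          rw [hee]; linarith
        · have hee0 : e u * e w = 0 := by
            rcases he u with h | h <;> rcases he w with h' | h' <;>
              simp [h, h'] at hee ⊢
          rw [hQ0 u w hee0, hee0]; norm_num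
      · rw [hb]; ring_nf; rfl
  have hsum := Finset.sum_le_sum (s := (univ : Finset V))
      (f := fun u => ∑ w, Q u w)
      (g := fun u => ∑ w, (B u w * Q u w + 3 * (e u * e w) * (1 - B u w)
        + (if u = w then Q u w else 0)))
      (fun u _ => Finset.sum_le_sum fun w _ => claim u w)
  rw [hQsumall] at hsum
  have e1 : ∑ u, ∑ w, B u w * Q u w = Matrix.trace (B * B * B) := by
    rw [hT]
    exact Finset.sum_congr rfl fun u _ => Finset.sum_congr rfl fun w _ => mul_comm _ _
  have e2 : ∑ u : V, ∑ w : V, 3 * (e u * e w) * (1 - B u w) = 6105 := by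
    have hpt : ∀ u w : V, (3:ℝ) * (e u * e w) * (1 - B u w)
        = 3 * (e u * e w) - 3 * B u w := by
      intro u w
      have : (3:ℝ) * (e u * e w) * (1 - B u w)
          = 3 * (e u * e w) - 3 * (e u * e w * B u w) := by ring
      rw [this, habs]
    simp only [hpt, Finset.sum_sub_distrib]
    have h1 : ∑ u : V, ∑ w : V, 3 * (e u * e w) = 9075 := by
      have hin : ∀ u : V, ∑ w : V, 3 * (e u * e w) = 165 * e u := by
        intro u
        have : ∑ w : V, 3 * (e u * e w) = (3 * e u) * ∑ w : V, e w := by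
          rw [Finset.mul_sum]
          exact Finset.sum_congr rfl fun w _ => by ring
        rw [this, hesum]; ring
      simp only [hin]
      rw [show ∑ u : V, 165 * e u = 165 * ∑ u : V, e u from (Finset.mul_sum _ _ _).symm,
        hesum]
      norm_num
    have h2 : ∑ u : V, ∑ w : V, 3 * B u w = 2970 := by
      have hin : ∀ u : V, ∑ w : V, 3 * B u w = 3 * ∑ w : V, B u w :=
        fun u => (Finset.mul_sum _ _ _).symm
      simp only [hin, hBrow]
      rw [show ∑ u : V, 3 * (18 * e u) = 54 * ∑ u : V, e u from by
        rw [Finset.mul_sum]; exact Finset.sum_congr rfl fun u _ => by ring, hesum]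
      norm_num
    rw [h1, h2]; norm_num
  have e3 : ∑ u : V, ∑ w : V, (if u = w then Q u w else 0) = 990 := by
    have : ∀ u : V, ∑ w : V, (if u = w then Q u w else 0) = Q u u := by
      intro u
      rw [Finset.sum_ite_eq univ u (fun w => Q u w)]
      simp
    simp only [this, htraceQ]
  have hfinal : (17820 : ℝ) ≤ Matrix.trace (B * B * B) + 6105 + 990 := by
    calc (17820 : ℝ) ≤ _ := hsum
    _ = (∑ u, ∑ w, B u w * Q u w) + (∑ u : V, ∑ w : V, 3 * (e u * e w) * (1 - B u w))
        + (∑ u : V, ∑ w : V, (if u = w then Q u w else 0)) := by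
      simp only [Finset.sum_add_distrib]
    _ = Matrix.trace (B * B * B) + 6105 + 990 := by rw [e1, e2, e3]
  linarith
end DRG55

/-- There is no distance-regular graph with intersection array {55, 36, 11; 1, 4, 45}. -/
theorem no_drg_55_36_11_1_4_45 :
    ¬ ∃ (V : Type) (_ : Fintype V) (G : SimpleGraph V),
      IsDRG3 G ![55, 36, 11] ![1, 4, 45] := by
  rintro ⟨V, _inst, G, hconn, hle, -, hb, hc⟩
  classical
  -- counting facts in sum form
  have Cdeg : ∀ y : V, (∑ z, if G.Adj y z ∧ G.dist y z = 1 then (1:ℝ) else 0) = 55 := by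
    intro y
    have h := DRG55.csum (fun z => G.Adj y z ∧ G.dist y z = 1) 55
      (by simpa using hb 0 y y (by simp))
    exact_mod_cast h
  have Cb1 : ∀ x y : V, G.dist x y = 1 →
      (∑ z, if G.Adj y z ∧ G.dist x z = 2 then (1:ℝ) else 0) = 36 := by
    intro x y hxy
    have h := DRG55.csum (fun z => G.Adj y z ∧ G.dist x z = 2) 36
      (by simpa using hb 1 x y (by simpa using hxy))
    exact_mod_cast h
  have Cb2 : ∀ x y : V, G.dist x y = 2 →
      (∑ z, if G.Adj y z ∧ G.dist x z = 3 then (1:ℝ) else 0) = 11 := by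
    intro x y hxy
    have h := DRG55.csum (fun z => G.Adj y z ∧ G.dist x z = 3) 11
      (by simpa using hb 2 x y (by simpa using hxy))
    exact_mod_cast h
  have Cc0 : ∀ x y : V, G.dist x y = 1 →
      (∑ z, if G.Adj y z ∧ G.dist x z = 0 then (1:ℝ) else 0) = 1 := by
    intro x y hxy
    have h := DRG55.csum (fun z => G.Adj y z ∧ G.dist x z = 0) 1
      (by simpa using hc 0 x y (by simpa using hxy))
    exact_mod_cast h
  have Cc1 : ∀ x y : V, G.dist x y = 2 →
      (∑ z, if G.Adj y z ∧ G.dist x z = 1 then (1:ℝ) else 0) = 4 := by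
    intro x y hxy
    have h := DRG55.csum (fun z => G.Adj y z ∧ G.dist x z = 1) 4
      (by simpa using hc 1 x y (by simpa using hxy))
    exact_mod_cast h
  have Cc2 : ∀ x y : V, G.dist x y = 3 →
      (∑ z, if G.Adj y z ∧ G.dist x z = 2 then (1:ℝ) else 0) = 45 := by
    intro x y hxy
    have h := DRG55.csum (fun z => G.Adj y z ∧ G.dist x z = 2) 45
      (by simpa using hc 2 x y (by simpa using hxy))
    exact_mod_cast h
  -- matrix identities
  have hMA1 := DRG55.MA1 G hconn hle Cdeg Cb1 Cc0 Cc1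
  have hMA2 := DRG55.MA2 G hconn hle Cdeg Cb1 Cb2 Cc1 Cc2
  have hJs := DRG55.Jsplit G hconn hle
  have hAJ := DRG55.rowAJ G Cdeg
  have hJA := DRG55.rowJA G Cdeg
  have hGsq := DRG55.Gsq (DRG55.Am G) (DRG55.Dk G 2) (DRG55.Dk G 3) (DRG55.Jm V)
    hMA1 hMA2 hJs hAJ hJA
  -- basic entry facts
  have hAsym : ∀ a b : V, DRG55.Am G a b = DRG55.Am G b a := by
    intro a b
    simp only [DRG55.Am, Matrix.of_apply]
    exact if_congr (G.adj_comm a b) rfl rfl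
  have hA01 : ∀ a b : V, DRG55.Am G a b = 0 ∨ DRG55.Am G a b = 1 := by
    intro a b
    simp only [DRG55.Am, Matrix.of_apply]
    split_ifs <;> simp
  have hAnn : ∀ a b : V, (0:ℝ) ≤ DRG55.Am G a b := by
    intro a b; rcases hA01 a b with h | h <;> rw [h] <;> norm_num
  have hAdiag : ∀ a : V, DRG55.Am G a a = 0 := by
    intro a
    simp [DRG55.Am, Matrix.of_apply]
  have hJent : ∀ a b : V, DRG55.Jm V a b = 1 := fun a b => rfl
  have hAone : ∀ a b : V, G.Adj a b → DRG55.Am G a b = 1 := by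
    intro a b h; simp [DRG55.Am, Matrix.of_apply, h]
  have hAzero : ∀ a b : V, ¬ G.Adj a b → DRG55.Am G a b = 0 := by
    intro a b h; simp [DRG55.Am, Matrix.of_apply, h]
  -- fix a vertex x
  obtain ⟨x⟩ : Nonempty V := hconn.nonempty
  have hesum : (∑ u, DRG55.Am G x u) = 55 := by
    have h := DRG55.Cdeg' G Cdeg x
    rw [← h]
    refine Finset.sum_congr rfl fun u _ => ?_
    simp [DRG55.Am, Matrix.of_apply]
  have hadj_dist : ∀ a b : V, G.Adj a b → G.dist a b = 1 :=
    fun a b h => SimpleGraph.dist_eq_one_iff_adj.mpr h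
  have heD2 : ∀ u, DRG55.Am G x u * DRG55.Dk G 2 x u = 0 := by
    intro u
    by_cases h : G.Adj x u
    · have : G.dist x u = 1 := hadj_dist x u h
      simp [DRG55.Dk, Matrix.of_apply, this]
    · simp [hAzero x u h]
  have hdist2 : ∀ u z : V, G.Adj x u → G.Adj x z → u ≠ z → ¬ G.Adj u z →
      G.dist u z = 2 := by
    intro u z hu hz huz hnadj
    have h1 : G.dist u z ≤ 2 := by
      calc G.dist u z ≤ G.dist u x + G.dist x z := hconn.dist_triangle
      _ ≤ 1 + 1 := by
          rw [hadj_dist u x (G.adj_comm x u |>.mp hu), hadj_dist x z hz]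
    have h2 : G.dist u z ≠ 0 := fun h0 => huz ((hconn.dist_eq_zero_iff).mp h0)
    have h3 : G.dist u z ≠ 1 := fun h1' => hnadj (SimpleGraph.dist_eq_one_iff_adj.mp h1')
    omega
  have hkey : ∀ u z : V, DRG55.Am G x u * DRG55.Am G x z * DRG55.Dk G 2 u z
      = DRG55.Am G x u * DRG55.Am G x z
        * (1 - (if u = z then (1:ℝ) else 0) - DRG55.Am G u z) := by
    intro u z
    by_cases hu : G.Adj x u
    · by_cases hz : G.Adj x z
      · rw [hAone x u hu, hAone x z hz]
        by_cases huz : u = z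
        · subst huz
          simp [DRG55.Dk, Matrix.of_apply, SimpleGraph.dist_self, hAdiag u]
        · by_cases hadj : G.Adj u z
          · have hd1 : G.dist u z = 1 := hadj_dist u z hadj
            simp [DRG55.Dk, Matrix.of_apply, hd1, huz, hAone u z hadj]
          · have hd2 : G.dist u z = 2 := hdist2 u z hu hz huz hadj
            simp [DRG55.Dk, Matrix.of_apply, hd2, huz, hAzero u z hadj]
      · rw [hAzero x z hz]; ring
    · rw [hAzero x u hu]; ring
  have hM := DRG55.qf_M_nonneg (DRG55.Am G) (DRG55.Dk G 2) (DRG55.Jm V) x hAsym hA01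
    hAdiag hJent hMA1 hGsq heD2 hkey hesum
  -- entries of A*A
  have hMA1e : ∀ a b : V, (DRG55.Am G * DRG55.Am G) a b
      = 55 * (if a = b then (1:ℝ) else 0) + 18 * DRG55.Am G a b
        + 4 * DRG55.Dk G 2 a b := by
    intro a b
    rw [hMA1]
    simp [Matrix.one_apply]
  -- the three local matrices
  set B : Matrix V V ℝ :=
    Matrix.of (fun u z => DRG55.Am G x u * DRG55.Am G u z * DRG55.Am G x z) with hB_def
  set P : Matrix V V ℝ := Matrix.diagonal (fun u => DRG55.Am G x u) with hP_def
  set K : Matrix V V ℝ :=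
    Matrix.of (fun u z => DRG55.Am G x u * DRG55.Am G x z) with hK_def
  have hBent : ∀ a b : V, B a b = DRG55.Am G x a * DRG55.Am G a b * DRG55.Am G x b :=
    fun a b => rfl
  have hKent : ∀ a b : V, K a b = DRG55.Am G x a * DRG55.Am G x b := fun a b => rfl
  -- B facts
  have hBsym : ∀ a b : V, B a b = B b a := by
    intro a b
    rw [hBent, hBent, hAsym a b]
    ring
  have hB01 : ∀ a b : V, B a b = 0 ∨ B a b = 1 := by
    intro a b
    rw [hBent]
    rcases hA01 x a with h1 | h1 <;> rcases hA01 a b with h2 | h2 <;>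
      rcases hA01 x b with h3 | h3 <;> rw [h1, h2, h3] <;> norm_num
  have hBnn : ∀ a b : V, (0:ℝ) ≤ B a b := by
    intro a b; rcases hB01 a b with h | h <;> rw [h] <;> norm_num
  have hBdiag : ∀ a : V, B a a = 0 := by
    intro a; rw [hBent, hAdiag a]; ring
  have habs : ∀ a b : V, DRG55.Am G x a * DRG55.Am G x b * B a b = B a b := by
    intro a b
    rw [hBent]
    rcases hA01 x a with h1 | h1 <;> rcases hA01 x b with h3 | h3 <;>
      rw [h1, h3] <;> ring
  have hBrow : ∀ u : V, ∑ w, B u w = 18 * DRG55.Am G x u := by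
    intro u
    have step1 : ∑ w, B u w = DRG55.Am G x u * ((DRG55.Am G * DRG55.Am G) u x) := by
      rw [Matrix.mul_apply, Finset.mul_sum]
      refine Finset.sum_congr rfl fun w _ => ?_
      rw [hBent, hAsym x w]
      ring
    rw [step1, hMA1e]
    by_cases hu : G.Adj x u
    · have hux : u ≠ x := fun h => by rw [h] at hu; exact G.irrefl hu
      have hAux : DRG55.Am G u x = 1 := by rw [hAsym u x]; exact hAone x u hu
      have hD2ux : DRG55.Dk G 2 u x = 0 := by
        have : G.dist u x = 1 := hadj_dist u x (G.adj_comm x u |>.mp hu)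
        simp [DRG55.Dk, Matrix.of_apply, this]
      rw [hAone x u hu, hAux, hD2ux, if_neg hux]
      ring
    · rw [hAzero x u hu]
      ring
  -- hQ3
  have hQ3 : ∀ u w : V, u ≠ w → B u w = 0 →
      DRG55.Am G x u * DRG55.Am G x w = 1 → (B * B) u w ≤ 3 := by
    intro u w huw hB0 hee
    have heu : DRG55.Am G x u = 1 := by
      rcases hA01 x u with h | h
      · rw [h] at hee; simp at hee
      · exact h
    have hew : DRG55.Am G x w = 1 := by
      rcases hA01 x w with h | h
      · rw [h] at hee; simp at hee
      · exact h
    have hAuw : DRG55.Am G u w = 0 := by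
      have h := hB0
      rw [hBent, heu, hew] at h
      linarith [h]
    have hnadj : ¬ G.Adj u w := by
      intro h
      rw [hAone u w h] at hAuw; norm_num at hAuw
    have hu : G.Adj x u := by
      by_contra h
      rw [hAzero x u h] at heu; norm_num at heu
    have hw : G.Adj x w := by
      by_contra h
      rw [hAzero x w h] at hew; norm_num at hew
    have hd2 : G.dist u w = 2 := hdist2 u w hu hw huw hnadj
    have hAAuw : (DRG55.Am G * DRG55.Am G) u w = 4 := by
      rw [hMA1e, hAuw, if_neg huw]
      have : DRG55.Dk G 2 u w = 1 := by simp [DRG55.Dk, Matrix.of_apply, hd2]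
      rw [this]; ring
    have hBleA : ∀ a b : V, B a b ≤ DRG55.Am G a b := by
      intro a b
      rw [hBent]
      rcases hA01 x a with h1 | h1 <;> rcases hA01 x b with h3 | h3 <;>
        rw [h1, h3] <;> nlinarith [hAnn a b]
    have hpt : ∀ t, B u t * B t w
        ≤ DRG55.Am G u t * DRG55.Am G t w - (if t = x then (1:ℝ) else 0) := by
      intro t
      by_cases ht : t = x
      · subst ht
        have hBut : B u t = 0 := by rw [hBent, hAdiag t]; ring
        rw [hBut, if_pos rfl, zero_mul]
        have h1 : DRG55.Am G u t = 1 := by rw [hAsym u t]; exact heu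
        have h2 : DRG55.Am G t w = 1 := hew
        rw [h1, h2]; norm_num
      · rw [if_neg ht, sub_zero]
        exact mul_le_mul (hBleA u t) (hBleA t w) (hBnn t w) (hAnn u t)
    have hsum : (B * B) u w
        ≤ ∑ t, (DRG55.Am G u t * DRG55.Am G t w - (if t = x then (1:ℝ) else 0)) := by
      rw [Matrix.mul_apply]
      exact Finset.sum_le_sum fun t _ => hpt t
    have hsum2 : ∑ t, (DRG55.Am G u t * DRG55.Am G t w - (if t = x then (1:ℝ) else 0))
        = 3 := by
      rw [Finset.sum_sub_distrib]
      have h1 : ∑ t, DRG55.Am G u t * DRG55.Am G t w = (DRG55.Am G * DRG55.Am G) u w :=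
        (Matrix.mul_apply).symm
      have h2 : ∑ t : V, (if t = x then (1:ℝ) else 0) = 1 := by
        rw [Finset.sum_ite_eq' Finset.univ x (fun _ => (1:ℝ))]
        simp
      rw [h1, h2, hAAuw]
      norm_num
    linarith
  -- lower bound
  have hlower := DRG55.lower_bound B (fun u => DRG55.Am G x u) (fun u => hA01 x u)
    hBsym hB01 hBdiag habs hBrow hesum hQ3
  -- product identities for upper bound
  have hesq : ∀ u, DRG55.Am G x u * DRG55.Am G x u = DRG55.Am G x u := by
    intro u; rcases hA01 x u with h | h <;> rw [h] <;> ring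
  have hPP : P * P = P := by
    rw [hP_def, Matrix.diagonal_mul_diagonal]
    exact congrArg Matrix.diagonal (funext hesq)
  have hPB : P * B = B := by
    ext a b
    rw [hP_def, Matrix.diagonal_mul, hBent a b]
    rcases hA01 x a with h | h <;> rw [h] <;> ring
  have hBP : B * P = B := by
    ext a b
    rw [hP_def, Matrix.mul_diagonal, hBent a b]
    rcases hA01 x b with h | h <;> rw [h] <;> ring
  have hPK : P * K = K := by
    ext a b
    rw [hP_def, Matrix.diagonal_mul, hKent a b]
    rcases hA01 x a with h | h <;> rw [h] <;> ring
  have hKP : K * P = K := by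
    ext a b
    rw [hP_def, Matrix.mul_diagonal, hKent a b]
    rcases hA01 x b with h | h <;> rw [h] <;> ring
  have hKK : K * K = (55:ℝ) • K := by
    ext a b
    rw [Matrix.mul_apply]
    have hpt : ∀ w, K a w * K w b
        = (DRG55.Am G x a * DRG55.Am G x b) * (DRG55.Am G x w * DRG55.Am G x w) := by
      intro w; rw [hKent, hKent]; ring
    simp only [hpt, hesq, ← Finset.mul_sum, hesum]
    rw [Matrix.smul_apply, hKent a b, smul_eq_mul]
    ring
  have habs2 : ∀ a w : V, B a w * DRG55.Am G x w = B a w := by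
    intro a w
    rw [hBent]
    rcases hA01 x w with h | h <;> rw [h] <;> ring
  have habs1 : ∀ w b : V, DRG55.Am G x w * B w b = B w b := by
    intro w b
    rw [hBent]
    rcases hA01 x w with h | h <;> rw [h] <;> ring
  have hBK : B * K = (18:ℝ) • K := by
    ext a b
    rw [Matrix.mul_apply]
    have hpt : ∀ w, B a w * K w b = DRG55.Am G x b * (B a w * DRG55.Am G x w) := by
      intro w; rw [hKent]; ring
    simp only [hpt, habs2, ← Finset.mul_sum, hBrow a]
    rw [Matrix.smul_apply, hKent a b, smul_eq_mul]
    ring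
  have hKB : K * B = (18:ℝ) • K := by
    ext a b
    rw [Matrix.mul_apply]
    have hpt : ∀ w, K a w * B w b = DRG55.Am G x a * (DRG55.Am G x w * B w b) := by
      intro w; rw [hKent]; ring
    simp only [hpt, habs1, ← Finset.mul_sum]
    have hcol : ∑ w, B w b = 18 * DRG55.Am G x b := by
      rw [show ∑ w, B w b = ∑ w, B b w from Finset.sum_congr rfl fun w _ => hBsym w b,
        hBrow b]
    rw [hcol, Matrix.smul_apply, hKent a b, smul_eq_mul]
    ring
  -- symmetry and traces
  have hPsym : ∀ a b : V, P a b = P b a := by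
    intro a b
    by_cases h : a = b
    · rw [h]
    · rw [hP_def, Matrix.diagonal_apply_ne _ h, Matrix.diagonal_apply_ne _ (Ne.symm h)]
  have hKsym : ∀ a b : V, K a b = K b a := by
    intro a b; rw [hKent, hKent]; ring
  have htB : Matrix.trace B = 0 := by
    simp only [Matrix.trace, Matrix.diag]
    exact Finset.sum_eq_zero fun u _ => hBdiag u
  have htP : Matrix.trace P = 55 := by
    rw [hP_def, Matrix.trace_diagonal]
    exact hesum
  have htK : Matrix.trace K = 55 := by
    simp only [Matrix.trace, Matrix.diag]
    calc ∑ u, K u u = ∑ u, DRG55.Am G x u := by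
          refine Finset.sum_congr rfl fun u _ => ?_
          rw [hKent, hesq]
    _ = 55 := hesum
  have htB2 : Matrix.trace (B * B) = 990 := by
    have h1 : ∀ u, (B * B) u u = ∑ w, B u w := by
      intro u
      rw [Matrix.mul_apply]
      refine Finset.sum_congr rfl fun w _ => ?_
      rw [hBsym w u]
      rcases hB01 u w with h | h <;> rw [h] <;> ring
    simp only [Matrix.trace, Matrix.diag, h1, hBrow]
    rw [← Finset.mul_sum, hesum]
    norm_num
  have hupper := DRG55.upper_bound B P K hPP hPB hBP hPK hKP hKK hBK hKB hBsym hPsym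
    hKsym hM htB htB2 htP htK
  linarith
end
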